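/- arXiv:2409.18154 — 3 statements merged into one kernel-verified Lean document; each statement's English description precedes it below -/
import Mathlib

section
/- Let N ≥ 5. For every v ∈ C_c^∞(ℝ^N \ {0}), the function u(x) := |x|^{-2} v(x) satisfies ∫_{ℝ^N} |x|^4 |Δu(x)|² dx = ∫_{ℝ^N} |Δv(x)|² dx. -/
open MeasureTheory Real

noncomputable section

abbrev EN (N : ℕ) := EuclideanSpace ℝ (Fin N)

/-- The Euclidean Laplacian. -/
def lap {N : ℕ} (u : EN N → ℝ) (x : EN N) : ℝ :=
  ∑ i : Fin N, fderiv ℝ (fun y => fderiv ℝ u y (EuclideanSpace.single i 1)) x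
    (EuclideanSpace.single i 1)

/-- The weighted divergence `div(|x|^α ∇u)(x) = |x|^α Δu(x) + α |x|^{α-2} (x · ∇u(x))`. -/
def wdiv {N : ℕ} (α : ℝ) (u : EN N → ℝ) (x : EN N) : ℝ :=
  ‖x‖ ^ α * lap u x + α * ‖x‖ ^ (α - 2) * (inner ℝ x (gradient u x) : ℝ)

/-- The fourth-order operator `div(|x|^α ∇(|x|^{-β} div(|x|^α ∇u)))`. -/
def biop {N : ℕ} (α β : ℝ) (u : EN N → ℝ) : EN N → ℝ :=
  wdiv α (fun y => ‖y‖ ^ (-β) * wdiv α u y)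

/-- Smooth compactly supported functions on `ℝ^N \ {0}`. -/
def TestFun {N : ℕ} (u : EN N → ℝ) : Prop :=
  ContDiff ℝ (⊤ : ℕ∞) u ∧ HasCompactSupport u ∧ (0 : EN N) ∉ tsupport u

/-- The sharp constant of the second-order Sobolev inequality. -/
def S0 (N : ℕ) : ℝ :=
  π ^ 2 * (N : ℝ) * ((N : ℝ) - 4) * ((N : ℝ) ^ 2 - 4) *
    (Gamma ((N : ℝ) / 2) / Gamma (N : ℝ)) ^ ((4 : ℝ) / (N : ℝ))

/-- The critical exponent `2** = 2N/(N-4)`. -/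
def twoStar (N : ℕ) : ℝ := 2 * (N : ℝ) / ((N : ℝ) - 4)

/-- The radial extremal function `U`. -/
def Ufun (N : ℕ) (α β : ℝ) (x : EN N) : ℝ :=
  (((N : ℝ) + β) * ((N : ℝ) + α - 2) * ((N : ℝ) + 2 * α - β - 4) *
      ((N : ℝ) + 3 * α - 2 * β - 6)) ^ (((N : ℝ) + β) / (4 * (α - β - 2))) *
    (‖x‖ ^ (-(α - β - 2)) * (1 + ‖x‖ ^ (α - β - 2)) ^ (-(((N : ℝ) + β) / (α - β - 2))))

/-- The Felli–Schneider curve. -/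
def betaFS (N : ℕ) (α : ℝ) : ℝ :=
  (N : ℝ) + 2 * α - 4 - Real.sqrt (((N : ℝ) - 2 + α) ^ 2 + 4 * ((N : ℝ) - 1))

/-- The sharp one-dimensional constant `B(M)`. -/
def Bconst (M : ℝ) : ℝ :=
  (M - 4) * (M - 2) * M * (M + 2) * (Gamma (M / 2) ^ 2 / (2 * Gamma M)) ^ ((4 : ℝ) / M)

namespace S2

variable {N : ℕ}

def ee (i : Fin N) : EN N := EuclideanSpace.single i 1

def Dd (i : Fin N) (f : EN N → ℝ) (x : EN N) : ℝ := fderiv ℝ f x (ee i)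

lemma lap_eq (u : EN N → ℝ) (x : EN N) : lap u x = ∑ i, Dd i (Dd i u) x := rfl

/-- directional derivatives of `f` at `x` are given by `f'`. -/
def D1 (f : EN N → ℝ) (x : EN N) (f' : Fin N → ℝ) : Prop :=
  ∃ L : EN N →L[ℝ] ℝ, HasFDerivAt f L x ∧ ∀ i, L (ee i) = f' i

namespace D1

variable {f g : EN N → ℝ} {x : EN N} {f' g' : Fin N → ℝ}

lemma dd (h : D1 f x f') (i : Fin N) : Dd i f x = f' i := by
  obtain ⟨L, hL, he⟩ := h
  rw [Dd, hL.fderiv]; exact he i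

lemma diffAt (h : D1 f x f') : DifferentiableAt ℝ f x :=
  h.choose_spec.1.differentiableAt

lemma congr_deriv (h : D1 f x f') (hg : ∀ i, f' i = g' i) : D1 f x g' := by
  obtain ⟨L, hL, he⟩ := h
  exact ⟨L, hL, fun i => (he i).trans (hg i)⟩

lemma add (hf : D1 f x f') (hg : D1 g x g') :
    D1 (fun y => f y + g y) x (fun i => f' i + g' i) := by
  obtain ⟨L, hL, he⟩ := hf; obtain ⟨M, hM, hm⟩ := hg
  exact ⟨L + M, hL.add hM, fun i => by simp [he i, hm i]⟩

lemma sub (hf : D1 f x f') (hg : D1 g x g') :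
    D1 (fun y => f y - g y) x (fun i => f' i - g' i) := by
  obtain ⟨L, hL, he⟩ := hf; obtain ⟨M, hM, hm⟩ := hg
  exact ⟨L - M, hL.sub hM, fun i => by simp [he i, hm i]⟩

lemma mul (hf : D1 f x f') (hg : D1 g x g') :
    D1 (fun y => f y * g y) x (fun i => f x * g' i + g x * f' i) := by
  obtain ⟨L, hL, he⟩ := hf; obtain ⟨M, hM, hm⟩ := hg
  exact ⟨f x • M + g x • L, hL.mul hM, fun i => by simp [he i, hm i]⟩

lemma const_mul (hf : D1 f x f') (c : ℝ) :
    D1 (fun y => c * f y) x (fun i => c * f' i) := by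
  obtain ⟨L, hL, he⟩ := hf
  exact ⟨c • L, hL.const_mul c, fun i => by simp [he i]⟩

lemma inv (hf : D1 f x f') (hx : f x ≠ 0) :
    D1 (fun y => (f y)⁻¹) x (fun i => -(f x ^ 2)⁻¹ * f' i) := by
  obtain ⟨L, hL, he⟩ := hf
  refine ⟨(-(f x ^ 2)⁻¹ : ℝ) • L, ?_, fun i => by simp [he i]⟩
  exact (hasDerivAt_inv hx).comp_hasFDerivAt x hL

lemma sum {F : Fin N → EN N → ℝ} {F' : Fin N → Fin N → ℝ}
    (h : ∀ j, D1 (F j) x (F' j)) :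
    D1 (fun y => ∑ j, F j y) x (fun i => ∑ j, F' j i) := by
  choose L hL he using h
  exact ⟨∑ j, L j, HasFDerivAt.fun_sum (fun j _ => hL j), fun i => by
    simp [ContinuousLinearMap.sum_apply, he]⟩

end D1

lemma D1_of_diff {f : EN N → ℝ} {x : EN N} (h : DifferentiableAt ℝ f x) :
    D1 f x (fun i => Dd i f x) :=
  ⟨fderiv ℝ f x, h.hasFDerivAt, fun _ => rfl⟩

lemma D1_const (c : ℝ) (x : EN N) : D1 (fun _ => c) x (fun _ => 0) :=
  ⟨0, hasFDerivAt_const c x, fun _ => rfl⟩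

lemma D1_coord (j : Fin N) (x : EN N) :
    D1 (fun y => y j) x (fun i => if j = i then 1 else 0) := by
  refine ⟨EuclideanSpace.proj j, (EuclideanSpace.proj (𝕜 := ℝ) j).hasFDerivAt, fun i => ?_⟩
  simp [ee, EuclideanSpace.single_apply]

def q : EN N → ℝ := fun y => ∑ j, y j * y j

lemma q_eq_norm (y : EN N) : q y = ‖y‖ ^ 2 := by
  rw [EuclideanSpace.norm_eq, Real.sq_sqrt (by positivity)]
  simp [q, sq, Real.norm_eq_abs, abs_mul_abs_self]

lemma q_pos {y : EN N} (hy : y ≠ 0) : 0 < q y := by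
  rw [q_eq_norm]; exact pow_pos (norm_pos_iff.mpr hy) 2

lemma D1_q (x : EN N) : D1 q x (fun i => 2 * x i) := by
  refine (D1.sum (fun j => (D1_coord j x).mul (D1_coord j x))).congr_deriv fun i => ?_
  have h : ∀ j : Fin N, x j * (if j = i then (1:ℝ) else 0) + x j * (if j = i then 1 else 0)
      = if j = i then 2 * x i else 0 := by
    intro j
    by_cases h : j = i
    · subst h; simp; ring
    · simp [h]
  simp only [h, Finset.sum_ite_eq', Finset.mem_univ, if_true]

end S2

namespace S2

variable {N : ℕ} {v : EN N → ℝ}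

lemma contDiff_Dd (hv : ContDiff ℝ (⊤ : ℕ∞) v) (j : Fin N) : ContDiff ℝ (⊤ : ℕ∞) (Dd j v) := by
  have h1 : ContDiff ℝ (⊤ : ℕ∞) (fderiv ℝ v) := hv.fderiv_right (by simp)
  exact (ContinuousLinearMap.apply ℝ ℝ (ee j)).contDiff.comp h1

lemma dd_symm (hv : ContDiff ℝ (⊤ : ℕ∞) v) (x : EN N) (i j : Fin N) :
    Dd i (Dd j v) x = Dd j (Dd i v) x := by
  have hdiff : ∀ y, HasFDerivAt v (fderiv ℝ v y) y := fun y =>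
    (hv.differentiable (by simp) y).hasFDerivAt
  have h1 : ContDiff ℝ (⊤ : ℕ∞) (fderiv ℝ v) := hv.fderiv_right (by simp)
  have h2 : HasFDerivAt (fderiv ℝ v) (fderiv ℝ (fderiv ℝ v) x) x :=
    (h1.differentiable (by simp) x).hasFDerivAt
  have key : ∀ a b : Fin N,
      Dd a (Dd b v) x = fderiv ℝ (fderiv ℝ v) x (ee a) (ee b) := by
    intro a b
    have : HasFDerivAt (Dd b v)
        ((ContinuousLinearMap.apply ℝ ℝ (ee b)).comp (fderiv ℝ (fderiv ℝ v) x)) x :=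
      (ContinuousLinearMap.apply ℝ ℝ (ee b)).hasFDerivAt.comp x h2
    rw [Dd, this.fderiv]; rfl
  rw [key i j, key j i]
  exact second_derivative_symmetric hdiff h2 (ee i) (ee j)

section vanish

variable {O : Set (EN N)}

lemma dd_zero_on {f : EN N → ℝ} (hO : IsOpen O) (hf : ∀ y ∈ O, f y = 0) {x : EN N} (hx : x ∈ O) (i : Fin N) :
    Dd i f x = 0 := by
  have hev : f =ᶠ[nhds x] (fun _ => (0:ℝ)) := by
    filter_upwards [hO.mem_nhds hx] with y hy using hf y hy
  rw [Dd, hev.fderiv_eq, fderiv_fun_const]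
  rfl

lemma lap_zero_on {f : EN N → ℝ} (hO : IsOpen O) (hf : ∀ y ∈ O, f y = 0) {x : EN N} (hx : x ∈ O) :
    lap f x = 0 := by
  rw [lap_eq]
  refine Finset.sum_eq_zero fun i _ => ?_
  exact dd_zero_on hO (fun y hy => dd_zero_on hO hf hy i) hx i

end vanish

end S2

namespace S2

variable {N : ℕ}

def qi : EN N → ℝ := fun y => (q y)⁻¹

def Wv (v : EN N → ℝ) : EN N → ℝ := fun y => ∑ j, Dd j v y * Dd j v y

def Tv (v : EN N → ℝ) : EN N → ℝ := fun y => ∑ j, y j * Dd j v y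

def uf (v : EN N → ℝ) : EN N → ℝ := fun y => qi y * v y

def Gf (v : EN N → ℝ) (i : Fin N) : EN N → ℝ := fun y =>
  4*((N:ℝ)-4) * (qi y * qi y * (y i * (v y * v y)))
  + 4 * (qi y * (y i * Wv v y))
  - 4*((N:ℝ)-4) * (qi y * (v y * Dd i v y))
  - 8 * (qi y * (Tv v y * Dd i v y))

variable {v : EN N → ℝ} {x : EN N}

lemma D1_qi (hx : x ≠ 0) : D1 qi x (fun i => -2 * (qi x * qi x) * x i) := by
  refine ((D1_q x).inv (q_pos hx).ne').congr_deriv fun i => ?_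
  have h : q x ≠ 0 := (q_pos hx).ne'
  simp only [qi]
  rw [pow_two, mul_inv]
  ring

lemma D1_v (hv : ContDiff ℝ (⊤ : ℕ∞) v) : D1 v x (fun i => Dd i v x) :=
  D1_of_diff ((hv.differentiable (by simp)).differentiableAt)

lemma D1_p (hv : ContDiff ℝ (⊤ : ℕ∞) v) (j : Fin N) :
    D1 (Dd j v) x (fun i => Dd i (Dd j v) x) :=
  D1_of_diff (((contDiff_Dd hv j).differentiable (by simp)).differentiableAt)

lemma D1_W (hv : ContDiff ℝ (⊤ : ℕ∞) v) :
    D1 (Wv v) x (fun i => 2 * ∑ j, Dd j v x * Dd i (Dd j v) x) := by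
  refine (D1.sum (fun j => (D1_p hv j).mul (D1_p hv j))).congr_deriv fun i => ?_
  rw [Finset.mul_sum]
  exact Finset.sum_congr rfl fun j _ => by ring

lemma D1_T (hv : ContDiff ℝ (⊤ : ℕ∞) v) :
    D1 (Tv v) x (fun i => Dd i v x + ∑ j, x j * Dd i (Dd j v) x) := by
  refine (D1.sum (fun j => (D1_coord j x).mul (D1_p hv j))).congr_deriv fun i => ?_
  rw [Finset.sum_add_distrib]
  have h : ∀ j : Fin N, Dd j v x * (if j = i then (1:ℝ) else 0)
      = if j = i then Dd i v x else 0 := by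
    intro j
    by_cases hj : j = i
    · subst hj; simp
    · simp [hj]
  simp only [h, Finset.sum_ite_eq', Finset.mem_univ, if_true]
  ring

lemma sum_Dd_G (hv : ContDiff ℝ (⊤ : ℕ∞) v) (hx : x ≠ 0) :
    ∑ i, Dd i (Gf v i) x
      = (lap v x - 4 * (q x)⁻¹ * Tv v x - 2*((N:ℝ)-4) * (q x)⁻¹ * v x)^2 - (lap v x)^2 := by
  have hq : q x ≠ 0 := (q_pos hx).ne'
  have hG : ∀ i, Dd i (Gf v i) x =
      (-16*((N:ℝ)-4)*(qi x)^3*(v x)^2 - 8*(qi x)^2*(Wv v x)) * (x i * x i)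
      + (16*((N:ℝ)-4)*(qi x)^2*(v x) + 16*(qi x)^2*(Tv v x)) * (x i * Dd i v x)
      + (-4*((N:ℝ)-4)*(qi x) - 8*(qi x)) * (Dd i v x * Dd i v x)
      + (-4*((N:ℝ)-4)*(qi x)*(v x) - 8*(qi x)*(Tv v x)) * (Dd i (Dd i v) x)
      + 8*(qi x) * (x i * ∑ j, Dd j v x * Dd i (Dd j v) x)
      + (-8*(qi x)) * (Dd i v x * ∑ j, x j * Dd i (Dd j v) x)
      + (4*((N:ℝ)-4)*(qi x)^2*(v x)^2 + 4*(qi x)*(Wv v x)) := by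
    intro i
    have hqi := D1_qi hx
    have hv1 := D1_v (x := x) hv
    have hD : D1 (Gf v i) x _ :=
      (((((hqi.mul hqi).mul ((D1_coord i x).mul (hv1.mul hv1))).const_mul
            (4*((N:ℝ)-4))).add
          ((hqi.mul ((D1_coord i x).mul (D1_W hv))).const_mul 4)).sub
        ((hqi.mul (hv1.mul (D1_p hv i))).const_mul (4*((N:ℝ)-4)))).sub
        ((hqi.mul ((D1_T hv).mul (D1_p hv i))).const_mul 8)
    rw [hD.dd i]
    simp only [eq_self_iff_true, if_true]
    ring
  rw [Finset.sum_congr rfl fun i _ => hG i]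
  have hsplit : ∀ (c1 c2 c3 c4 c5 c6 c7 : ℝ),
      (∑ i : Fin N, (c1 * (x i * x i) + c2 * (x i * Dd i v x) + c3 * (Dd i v x * Dd i v x)
        + c4 * (Dd i (Dd i v) x)
        + c5 * (x i * ∑ j, Dd j v x * Dd i (Dd j v) x)
        + c6 * (Dd i v x * ∑ j, x j * Dd i (Dd j v) x) + c7))
      = c1 * q x + c2 * Tv v x + c3 * Wv v x + c4 * lap v x
        + c5 * (∑ i, x i * ∑ j, Dd j v x * Dd i (Dd j v) x)
        + c6 * (∑ i, Dd i v x * ∑ j, x j * Dd i (Dd j v) x) + (N:ℝ) * c7 := by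
    intro c1 c2 c3 c4 c5 c6 c7
    simp only [Finset.sum_add_distrib, ← Finset.mul_sum, Finset.sum_const, Finset.card_univ,
      Fintype.card_fin, nsmul_eq_mul]
    rw [lap_eq]
    simp only [q, Tv, Wv]
  rw [hsplit]
  have hSym : (∑ i, x i * ∑ j, Dd j v x * Dd i (Dd j v) x)
      = ∑ i, Dd i v x * ∑ j, x j * Dd i (Dd j v) x := by
    simp only [Finset.mul_sum]
    rw [Finset.sum_comm]
    refine Finset.sum_congr rfl fun i _ => Finset.sum_congr rfl fun j _ => ?_
    rw [dd_symm hv x j i]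
    ring
  rw [hSym]
  simp only [qi]
  field_simp
  ring

lemma q_lap_u (hv : ContDiff ℝ (⊤ : ℕ∞) v) (hx : x ≠ 0) :
    q x * lap (uf v) x
      = lap v x - 4 * (q x)⁻¹ * Tv v x - 2*((N:ℝ)-4) * (q x)⁻¹ * v x := by
  have hq : q x ≠ 0 := (q_pos hx).ne'
  have hstep : ∀ k, Dd k (Dd k (uf v)) x
      = Dd k (fun y => qi y * Dd k v y + v y * (-2 * (qi y * qi y) * y k)) x := by
    intro k
    have hev : Dd k (uf v) =ᶠ[nhds x]
        (fun y => qi y * Dd k v y + v y * (-2 * (qi y * qi y) * y k)) := by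
      filter_upwards [isOpen_compl_singleton.mem_nhds hx] with y hy
      have hy0 : y ≠ 0 := hy
      exact ((D1_qi hy0).mul (D1_v hv)).dd k
    show fderiv ℝ (Dd k (uf v)) x (ee k) = _
    rw [hev.fderiv_eq]
    rfl
  have hk : ∀ k, Dd k (Dd k (uf v)) x
      = qi x * Dd k (Dd k v) x + (-4 * (qi x)^2) * (x k * Dd k v x)
        + (8 * (qi x)^3 * v x) * (x k * x k) + (-2 * (qi x)^2 * v x) := by
    intro k
    rw [hstep k]
    have hqi := D1_qi hx
    have hv1 := D1_v (x := x) hv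
    have hD : D1 (fun y => qi y * Dd k v y + v y * (-2 * (qi y * qi y) * y k)) x _ :=
      (hqi.mul (D1_p hv k)).add
        (hv1.mul (((hqi.mul hqi).const_mul (-2)).mul (D1_coord k x)))
    rw [hD.dd k]
    simp only [eq_self_iff_true, if_true]
    ring
  have hsum : lap (uf v) x
      = qi x * lap v x + (-4 * (qi x)^2) * Tv v x + (8 * (qi x)^3 * v x) * q x
        + (N:ℝ) * (-2 * (qi x)^2 * v x) := by
    rw [lap_eq, Finset.sum_congr rfl fun k _ => hk k]
    simp only [Finset.sum_add_distrib, ← Finset.mul_sum, Finset.sum_const, Finset.card_univ,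
      Fintype.card_fin, nsmul_eq_mul]
    rw [lap_eq]
    simp only [q, Tv, Wv]
    ring
  rw [hsum]
  simp only [qi]
  field_simp
  ring

end S2

namespace S2

variable {N : ℕ} {v : EN N → ℝ} {x : EN N}

lemma pointwise_main (hv : ContDiff ℝ (⊤ : ℕ∞) v) (h0 : (0 : EN N) ∉ tsupport v) (x : EN N) :
    (q x)^2 * (lap (uf v) x)^2 - (lap v x)^2 = ∑ i, Dd i (Gf v i) x := by
  have hO : IsOpen ((tsupport v)ᶜ) := (isClosed_tsupport v).isOpen_compl
  have hv0 : ∀ y ∈ (tsupport v)ᶜ, v y = 0 := fun y hy => image_eq_zero_of_notMem_tsupport hy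
  by_cases hx : x ∈ (tsupport v)ᶜ
  · have hd0 : ∀ y ∈ (tsupport v)ᶜ, ∀ j, Dd j v y = 0 := fun y hy j => dd_zero_on hO hv0 hy j
    have hu0 : ∀ y ∈ (tsupport v)ᶜ, uf v y = 0 := fun y hy => by simp [uf, hv0 y hy]
    have hG0 : ∀ i, ∀ y ∈ (tsupport v)ᶜ, Gf v i y = 0 := by
      intro i y hy
      simp [Gf, Wv, Tv, hv0 y hy, hd0 y hy]
    rw [lap_zero_on hO hu0 hx, lap_zero_on hO hv0 hx,
      Finset.sum_congr rfl fun i _ => dd_zero_on hO (hG0 i) hx i]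
    simp
  · have hx0 : x ≠ 0 := by
      rintro rfl
      exact h0 (not_not.mp hx)
    rw [sum_Dd_G hv hx0]
    have h2 : (q x)^2 * (lap (uf v) x)^2 = (q x * lap (uf v) x)^2 := by ring
    rw [h2, q_lap_u hv hx0]

lemma contDiff_q : ContDiff ℝ (⊤ : ℕ∞) (q (N := N)) :=
  ContDiff.sum fun j _ =>
    ((EuclideanSpace.proj (𝕜 := ℝ) j).contDiff).mul (EuclideanSpace.proj (𝕜 := ℝ) j).contDiff

lemma contDiffAt_qi (hx : x ≠ 0) : ContDiffAt ℝ (⊤ : ℕ∞) (qi (N := N)) x :=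
  (contDiff_q.contDiffAt).inv (q_pos hx).ne'

lemma contDiff_uf (hv : ContDiff ℝ (⊤ : ℕ∞) v) (h0 : (0 : EN N) ∉ tsupport v) :
    ContDiff ℝ (⊤ : ℕ∞) (uf v) := by
  rw [contDiff_iff_contDiffAt]
  intro x
  by_cases hx : x ∈ (tsupport v)ᶜ
  · have hO : IsOpen ((tsupport v)ᶜ) := (isClosed_tsupport v).isOpen_compl
    refine ContDiffAt.congr_of_eventuallyEq (contDiffAt_const (c := 0)) ?_
    filter_upwards [hO.mem_nhds hx] with y hy
    simp [uf, image_eq_zero_of_notMem_tsupport hy]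
  · have hx0 : x ≠ 0 := by rintro rfl; exact h0 (not_not.mp hx)
    exact (contDiffAt_qi hx0).mul hv.contDiffAt

lemma contDiff_Wv (hv : ContDiff ℝ (⊤ : ℕ∞) v) : ContDiff ℝ (⊤ : ℕ∞) (Wv v) :=
  ContDiff.sum fun j _ => (contDiff_Dd hv j).mul (contDiff_Dd hv j)

lemma contDiff_Tv (hv : ContDiff ℝ (⊤ : ℕ∞) v) : ContDiff ℝ (⊤ : ℕ∞) (Tv v) :=
  ContDiff.sum fun j _ =>
    ((EuclideanSpace.proj (𝕜 := ℝ) j).contDiff).mul (contDiff_Dd hv j)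

lemma contDiff_G (hv : ContDiff ℝ (⊤ : ℕ∞) v) (h0 : (0 : EN N) ∉ tsupport v) (i : Fin N) :
    ContDiff ℝ (⊤ : ℕ∞) (Gf v i) := by
  rw [contDiff_iff_contDiffAt]
  intro x
  by_cases hx : x ∈ (tsupport v)ᶜ
  · have hO : IsOpen ((tsupport v)ᶜ) := (isClosed_tsupport v).isOpen_compl
    have hv0 : ∀ y ∈ (tsupport v)ᶜ, v y = 0 := fun y hy => image_eq_zero_of_notMem_tsupport hy
    have hd0 : ∀ y ∈ (tsupport v)ᶜ, ∀ j, Dd j v y = 0 := fun y hy j => dd_zero_on hO hv0 hy j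
    refine ContDiffAt.congr_of_eventuallyEq (contDiffAt_const (c := 0)) ?_
    filter_upwards [hO.mem_nhds hx] with y hy
    simp [Gf, Wv, Tv, hv0 y hy, hd0 y hy]
  · have hx0 : x ≠ 0 := by rintro rfl; exact h0 (not_not.mp hx)
    have hqi := contDiffAt_qi (N := N) hx0
    have hcoord : ContDiffAt ℝ (⊤ : ℕ∞) (fun y : EN N => y i) x :=
      (EuclideanSpace.proj (𝕜 := ℝ) i).contDiff.contDiffAt
    exact (((contDiffAt_const.mul
          ((hqi.mul hqi).mul (hcoord.mul (hv.contDiffAt.mul hv.contDiffAt)))).add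
        (contDiffAt_const.mul (hqi.mul (hcoord.mul (contDiff_Wv hv).contDiffAt)))).sub
      (contDiffAt_const.mul
        (hqi.mul (hv.contDiffAt.mul (contDiff_Dd hv i).contDiffAt)))).sub
      (contDiffAt_const.mul
        (hqi.mul ((contDiff_Tv hv).contDiffAt.mul (contDiff_Dd hv i).contDiffAt)))

lemma supp_G (hsupp : HasCompactSupport v) (i : Fin N) : HasCompactSupport (Gf v i) := by
  refine HasCompactSupport.intro hsupp ?_
  intro y hy
  have hO : IsOpen ((tsupport v)ᶜ) := (isClosed_tsupport v).isOpen_compl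
  have hv0 : ∀ z ∈ (tsupport v)ᶜ, v z = 0 := fun z hz => image_eq_zero_of_notMem_tsupport hz
  have hd0 : ∀ j, Dd j v y = 0 := fun j => dd_zero_on hO hv0 hy j
  simp [Gf, Wv, Tv, hv0 y hy, hd0]

lemma supp_uf (hsupp : HasCompactSupport v) : HasCompactSupport (uf v) :=
  HasCompactSupport.intro hsupp fun y hy => by
    simp [uf, image_eq_zero_of_notMem_tsupport hy]

lemma cont_lap {f : EN N → ℝ} (hf : ContDiff ℝ (⊤ : ℕ∞) f) : Continuous (lap f) := by
  have : lap f = fun x => ∑ i, Dd i (Dd i f) x := rfl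
  rw [this]
  exact continuous_finset_sum _ fun i _ => (contDiff_Dd (contDiff_Dd hf i) i).continuous

lemma supp_lap {f : EN N → ℝ} (hsupp : HasCompactSupport f) : HasCompactSupport (lap f) := by
  refine HasCompactSupport.intro hsupp ?_
  intro y hy
  have hO : IsOpen ((tsupport f)ᶜ) := (isClosed_tsupport f).isOpen_compl
  exact lap_zero_on hO (fun z hz => image_eq_zero_of_notMem_tsupport hz) hy

lemma integral_Dd_eq_zero (f : EN N → ℝ) (hf : ContDiff ℝ (⊤ : ℕ∞) f)
    (hsupp : HasCompactSupport f) (i : Fin N) : ∫ x : EN N, Dd i f x = 0 := by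
  have hdiff : Differentiable ℝ f := hf.differentiable (by simp)
  have hcont : Continuous fun x => Dd i f x := (contDiff_Dd hf i).continuous
  have hsupp' : HasCompactSupport fun x : EN N => fderiv ℝ f x (ee i) :=
    HasCompactSupport.fderiv_apply ℝ hsupp (ee i)
  have h := integral_mul_fderiv_eq_neg_fderiv_mul_of_integrable
    (μ := (volume : Measure (EN N))) (f := f) (g := fun _ => (1:ℝ)) (v := ee i)
    ?_ ?_ ?_ (fun x _ => hdiff x) (fun x _ => differentiableAt_const _)
  · simp only [fderiv_fun_const, Pi.zero_apply, ContinuousLinearMap.zero_apply, mul_zero, mul_one,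
      integral_zero] at h
    have : ∫ x : EN N, Dd i f x = ∫ x : EN N, fderiv ℝ f x (ee i) := rfl
    rw [this]
    linarith
  · simpa using (show Integrable (fun x : EN N => fderiv ℝ f x (ee i)) from
      hcont.integrable_of_hasCompactSupport hsupp')
  · simp only [fderiv_fun_const, Pi.zero_apply, ContinuousLinearMap.zero_apply, mul_zero]
    exact integrable_zero _ _ _
  · simpa using hf.continuous.integrable_of_hasCompactSupport hsupp

end S2

open S2 in
private lemma stmt2_aux {N : ℕ} (v : EN N → ℝ) (hv : TestFun v) :
    (∫ x : EN N, ‖x‖ ^ (4 : ℝ) * lap (fun y : EN N => ‖y‖ ^ (-2 : ℝ) * v y) x ^ 2) =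
      ∫ x : EN N, lap v x ^ 2 := by
  obtain ⟨hsm, hsupp, h0⟩ := hv
  have hfun : (fun y : EN N => ‖y‖ ^ (-2:ℝ) * v y) = uf v := by
    funext y
    have h2 : ‖y‖ ^ (-2:ℝ) = (q y)⁻¹ := by
      rw [q_eq_norm, show ((-2:ℝ)) = -((2:ℕ):ℝ) by norm_num, Real.rpow_neg (norm_nonneg y),
        Real.rpow_natCast]
    rw [h2]; rfl
  rw [hfun]
  have hint1 : Integrable (fun x : EN N => (q x)^2 * (lap (uf v) x)^2) := by
    refine Continuous.integrable_of_hasCompactSupport ?_ ?_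
    · exact ((contDiff_q.continuous).pow 2).mul ((cont_lap (contDiff_uf hsm h0)).pow 2)
    · refine HasCompactSupport.intro (supp_lap (supp_uf hsupp)) fun y hy => ?_
      rw [image_eq_zero_of_notMem_tsupport hy]
      ring
  have hint2 : Integrable (fun x : EN N => (lap v x)^2) := by
    refine Continuous.integrable_of_hasCompactSupport ((cont_lap hsm).pow 2) ?_
    refine HasCompactSupport.intro (supp_lap hsupp) fun y hy => ?_
    rw [image_eq_zero_of_notMem_tsupport hy]
    ring
  have hintG : ∀ i : Fin N, Integrable (fun x : EN N => Dd i (Gf v i) x) := fun i =>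
    ((contDiff_Dd (contDiff_G hsm h0 i) i).continuous).integrable_of_hasCompactSupport
      (HasCompactSupport.fderiv_apply ℝ (supp_G hsupp i) (ee i))
  have key : (∫ x : EN N, ((q x)^2 * (lap (uf v) x)^2 - (lap v x)^2)) = 0 := by
    have hfe : (fun x : EN N => (q x)^2 * (lap (uf v) x)^2 - (lap v x)^2)
        = fun x => ∑ i, Dd i (Gf v i) x := funext (pointwise_main hsm h0)
    rw [hfe, integral_finset_sum _ fun i _ => hintG i]
    exact Finset.sum_eq_zero fun i _ =>
      integral_Dd_eq_zero _ (contDiff_G hsm h0 i) (supp_G hsupp i) i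
  rw [integral_sub hint1 hint2] at key
  have hleft : (∫ x : EN N, ‖x‖ ^ (4:ℝ) * lap (uf v) x ^ 2)
      = ∫ x : EN N, (q x)^2 * (lap (uf v) x)^2 := by
    congr 1
    funext x
    rw [q_eq_norm, show ((4:ℝ)) = ((4:ℕ):ℝ) by norm_num, Real.rpow_natCast]
    ring
  rw [hleft]
  linarith

theorem stmt2 {N : ℕ} (hN : 5 ≤ N) (v : EN N → ℝ) (hv : TestFun v) :
    (∫ x : EN N, ‖x‖ ^ (4 : ℝ) * lap (fun y : EN N => ‖y‖ ^ (-2 : ℝ) * v y) x ^ 2) =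
      ∫ x : EN N, lap v x ^ 2 := stmt2_aux v hv
end
end

section
/- Let N ≥ 5, α > 2-N and (N-4)α/(N-2) - 4 ≤ β < α-2, and let γ, p, U be as in the context. Then for every x ∈ ℝ^N \ {0}, div(|x|^α ∇(|x|^{-β} div(|x|^α ∇U)))(x) = |x|^γ U(x)^{p-1}; i.e., U is a positive radial solution of the Euler–Lagrange equation of the second-order Caffarelli–Kohn–Nirenberg inequality. -/
open MeasureTheory Real

noncomputable section

lemma hasDerivAt_atom (h c E : ℝ) {s : ℝ} (hs : 0 < s) :
    HasDerivAt (fun t : ℝ => t ^ E * (1 + t ^ h) ^ c)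
      (E * (s ^ (E - 1) * (1 + s ^ h) ^ c)
        + c * h * (s ^ (E + h - 1) * (1 + s ^ h) ^ (c - 1))) s := by
  have hw : (0:ℝ) < 1 + s ^ h := by positivity
  have h1 : HasDerivAt (fun t : ℝ => t ^ E) (E * s ^ (E - 1)) s :=
    Real.hasDerivAt_rpow_const (Or.inl hs.ne')
  have h2 : HasDerivAt (fun t : ℝ => 1 + t ^ h) (h * s ^ (h - 1)) s :=
    (Real.hasDerivAt_rpow_const (Or.inl hs.ne')).const_add 1
  have h3 : HasDerivAt (fun t : ℝ => (1 + t ^ h) ^ c)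
      (h * s ^ (h - 1) * c * (1 + s ^ h) ^ (c - 1)) s :=
    h2.rpow_const (Or.inl hw.ne')
  have h4 := h1.mul h3
  refine h4.congr_deriv ?_
  rw [show E + h - 1 = E + (h - 1) by ring, Real.rpow_add hs]
  ring

def P0 (b h : ℝ) : ℝ → ℝ := fun s => s ^ (-h) * (1 + s ^ h) ^ (-b)

def P0' (b h : ℝ) : ℝ → ℝ := fun s =>
  (-h) * (s ^ (-h - 1) * (1 + s ^ h) ^ (-b))
    + (-b * h) * (s ^ (-1 : ℝ) * (1 + s ^ h) ^ (-b - 1))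

def P0'' (b h : ℝ) : ℝ → ℝ := fun s =>
  (h * (h + 1)) * (s ^ (-h - 2) * (1 + s ^ h) ^ (-b))
    + (b * h * (h + 1)) * (s ^ (-2 : ℝ) * (1 + s ^ h) ^ (-b - 1))
    + (b * (b + 1) * h ^ 2) * (s ^ (h - 2) * (1 + s ^ h) ^ (-b - 2))

def P1 (b h : ℝ) : ℝ → ℝ := fun s =>
  (-(4 * b * h ^ 2)) * (s ^ (0 : ℝ) * (1 + s ^ h) ^ (-b))
    + (-(4 * b ^ 2 * h ^ 2)) * (s ^ h * (1 + s ^ h) ^ (-b - 1))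
    + (4 * b * (b + 1) * h ^ 2) * (s ^ (2 * h) * (1 + s ^ h) ^ (-b - 2))

def P1' (b h : ℝ) : ℝ → ℝ := fun s =>
  (4 * b * (b + 1) * (b + 2) * h ^ 3) * (s ^ (2 * h - 1) * (1 + s ^ h) ^ (-b - 2))
    + (-(4 * b * (b + 1) * (b + 2) * h ^ 3)) * (s ^ (3 * h - 1) * (1 + s ^ h) ^ (-b - 3))

def P1'' (b h : ℝ) : ℝ → ℝ := fun s =>
  (4 * b * (b + 1) * (b + 2) * h ^ 3 * (2 * h - 1)) * (s ^ (2 * h - 2) * (1 + s ^ h) ^ (-b - 2))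
    + (-(4 * b * (b + 1) * (b + 2) * h ^ 3 * ((b + 5) * h - 1)))
        * (s ^ (3 * h - 2) * (1 + s ^ h) ^ (-b - 3))
    + (4 * b * (b + 1) * (b + 2) * (b + 3) * h ^ 4) * (s ^ (4 * h - 2) * (1 + s ^ h) ^ (-b - 4))

lemma l0 (b h : ℝ) {s : ℝ} (hs : 0 < s) : HasDerivAt (P0 b h) (P0' b h s) s := by
  have := hasDerivAt_atom h (-b) (-h) hs
  unfold P0 P0'
  convert this using 1
  ring_nf

lemma l1 (b h : ℝ) {s : ℝ} (hs : 0 < s) : HasDerivAt (P0' b h) (P0'' b h s) s := by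
  have := ((hasDerivAt_atom h (-b) (-h - 1) hs).const_mul (-h)).add
    ((hasDerivAt_atom h (-b - 1) (-1 : ℝ) hs).const_mul (-b * h))
  unfold P0' P0''
  refine this.congr_deriv ?_
  ring_nf

lemma l2 (b h : ℝ) {s : ℝ} (hs : 0 < s) : HasDerivAt (P1 b h) (P1' b h s) s := by
  have := (((hasDerivAt_atom h (-b) (0 : ℝ) hs).const_mul (-(4 * b * h ^ 2))).add
    ((hasDerivAt_atom h (-b - 1) h hs).const_mul (-(4 * b ^ 2 * h ^ 2)))).add
    ((hasDerivAt_atom h (-b - 2) (2 * h) hs).const_mul (4 * b * (b + 1) * h ^ 2))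
  unfold P1 P1'
  refine this.congr_deriv ?_
  ring_nf

lemma l3 (b h : ℝ) {s : ℝ} (hs : 0 < s) : HasDerivAt (P1' b h) (P1'' b h s) s := by
  have := ((hasDerivAt_atom h (-b - 2) (2 * h - 1) hs).const_mul
      (4 * b * (b + 1) * (b + 2) * h ^ 3)).add
    ((hasDerivAt_atom h (-b - 3) (3 * h - 1) hs).const_mul
      (-(4 * b * (b + 1) * (b + 2) * h ^ 3)))
  unfold P1' P1''
  refine this.congr_deriv ?_
  ring_nf
-- appended to a2
lemma e1 (b h M : ℝ) (hM : M = 4 * b * h + 4 * h + 4) {s : ℝ} (hs : 0 < s) :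
    s ^ (h + 1) * (4 * s * P0'' b h s + M * P0' b h s) = P1 b h s := by
  subst hM
  unfold P0' P0'' P1
  have hm : ∀ u v c : ℝ, u + 1 + v = c → s ^ u * (s * s ^ v) = s ^ c := by
    intro u v c hc
    rw [show (s : ℝ) * s ^ v = s ^ (1:ℝ) * s ^ v by rw [Real.rpow_one],
      ← Real.rpow_add hs, ← Real.rpow_add hs, ← hc]
    ring_nf
  have hm' : ∀ u v c : ℝ, u + v = c → s ^ u * s ^ v = s ^ c := by
    intro u v c hc
    rw [← Real.rpow_add hs, hc]
  have m1 := hm (h+1) (-h-2) 0 (by ring)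
  have m2 := hm (h+1) (-2 : ℝ) h (by ring)
  have m3 := hm (h+1) (h-2) (2*h) (by ring)
  have m4 := hm' (h+1) (-h-1) 0 (by ring)
  have m5 := hm' (h+1) (-1 : ℝ) h (by ring)
  linear_combination
    (4 * (h*(h+1)) * ((1+s^h)^(-b))) * m1
    + (4 * (b*h*(h+1)) * ((1+s^h)^(-b-1))) * m2
    + (4 * (b*(b+1)*h^2) * ((1+s^h)^(-b-2))) * m3
    + ((4*b*h+4*h+4) * (-h) * ((1+s^h)^(-b))) * m4
    + ((4*b*h+4*h+4) * (-b*h) * ((1+s^h)^(-b-1))) * m5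

lemma e2 (b h M r : ℝ) (hM : M = 4 * b * h + 4 * h + 4) {s : ℝ} (hs : 0 < s) :
    s ^ (h + 1 + r) * (4 * s * P1'' b h s + M * P1' b h s)
      = 16 * b * (b+1) * (b+2) * (b+3) * h ^ 4 * (s ^ (3*h+r) * (1 + s ^ h) ^ (-b - 4)) := by
  have hw : (0:ℝ) < 1 + s ^ h := by positivity
  have hm : ∀ u v c : ℝ, u + 1 + v = c → s ^ u * (s * s ^ v) = s ^ c := by
    intro u v c hc
    rw [show (s : ℝ) * s ^ v = s ^ (1:ℝ) * s ^ v by rw [Real.rpow_one],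
      ← Real.rpow_add hs, ← Real.rpow_add hs, ← hc]
    ring_nf
  have hm' : ∀ u v c : ℝ, u + v = c → s ^ u * s ^ v = s ^ c := by
    intro u v c hc
    rw [← Real.rpow_add hs, hc]
  set QR : ℝ := 4 * b * (b+1) * (b+2) * h ^ 3 with hQR
  have stepA : s ^ (h + 1 + r) * (4 * s * P1'' b h s + M * P1' b h s)
      = 4 * (b+3) * h * QR * (s ^ (3*h+r) * (1+s^h)^(-b-2)
          - 2 * (s ^ (4*h+r) * (1+s^h)^(-b-3)) + s ^ (5*h+r) * (1+s^h)^(-b-4)) := by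
    subst hM
    unfold P1' P1''
    have m1 := hm (h+1+r) (2*h-2) (3*h+r) (by ring)
    have m2 := hm (h+1+r) (3*h-2) (4*h+r) (by ring)
    have m3 := hm (h+1+r) (4*h-2) (5*h+r) (by ring)
    have m4 := hm' (h+1+r) (2*h-1) (3*h+r) (by ring)
    have m5 := hm' (h+1+r) (3*h-1) (4*h+r) (by ring)
    linear_combination
      (4 * (QR*(2*h-1)) * ((1+s^h)^(-b-2))) * m1
      + (4 * (-(QR*((b+5)*h-1))) * ((1+s^h)^(-b-3))) * m2
      + (4 * (QR*(b+3)*h) * ((1+s^h)^(-b-4))) * m3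
      + ((4*b*h+4*h+4) * QR * ((1+s^h)^(-b-2))) * m4
      + ((4*b*h+4*h+4) * (-QR) * ((1+s^h)^(-b-3))) * m5
  have t2 : s ^ (2*h) = s ^ h * s ^ h := by rw [← Real.rpow_add hs]; ring_nf
  have n1 : (1+s^h)^(-b-2) = (1+s^h)^(-b-4) * (1 + 2*s^h + s^(2*h)) := by
    rw [show (-b-2 : ℝ) = (-b-4) + 1 + 1 by ring, Real.rpow_add hw, Real.rpow_add hw,
      Real.rpow_one, t2]
    ring
  have n2 : (1+s^h)^(-b-3) = (1+s^h)^(-b-4) * (1 + s^h) := by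
    rw [show (-b-3 : ℝ) = (-b-4) + 1 by ring, Real.rpow_add hw, Real.rpow_one]
  have m6 := hm' (3*h+r) h (4*h+r) (by ring)
  have m7 := hm' (4*h+r) h (5*h+r) (by ring)
  have m8 := hm' (3*h+r) (2*h) (5*h+r) (by ring)
  have stepB : s ^ (3*h+r) * (1+s^h)^(-b-2)
      - 2 * (s ^ (4*h+r) * (1+s^h)^(-b-3)) + s ^ (5*h+r) * (1+s^h)^(-b-4)
      = s ^ (3*h+r) * (1+s^h)^(-b-4) := by
    linear_combination (s ^ (3*h+r)) * n1 - 2 * (s ^ (4*h+r)) * n2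
      + ((1+s^h)^(-b-4)) * (2 * m6 - 2 * m7 + m8)
  rw [stepA, stepB, hQR]
  ring

lemma wdiv_congr {N : ℕ} (α : ℝ) {f g : EN N → ℝ} {x : EN N} (hfg : f =ᶠ[nhds x] g) :
    wdiv α f x = wdiv α g x := by
  have hlap : lap f x = lap g x := by
    unfold lap
    refine Finset.sum_congr rfl fun i _ => ?_
    have h1 : (fun y => fderiv ℝ f y (EuclideanSpace.single i 1))
        =ᶠ[nhds x] (fun y => fderiv ℝ g y (EuclideanSpace.single i 1)) :=
      (hfg.fderiv (𝕜 := ℝ)).mono fun y hy => by simp only [hy]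
    rw [h1.fderiv_eq]
  have hgrad : gradient f x = gradient g x := by
    unfold gradient
    rw [hfg.fderiv_eq]
  rw [wdiv, wdiv, hlap, hgrad]

lemma wdiv_radial {N : ℕ} (α : ℝ) (G G' G'' : ℝ → ℝ)
    (hG : ∀ s : ℝ, 0 < s → HasDerivAt G (G' s) s)
    (hG' : ∀ s : ℝ, 0 < s → HasDerivAt G' (G'' s) s)
    (x : EN N) (hx : x ≠ 0) :
    wdiv α (fun y => G (‖y‖ ^ 2)) x
      = ‖x‖ ^ α * (4 * (‖x‖ ^ 2) * G'' (‖x‖ ^ 2) + (2 * N + 2 * α) * G' (‖x‖ ^ 2)) := by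
  have hxn : (0:ℝ) < ‖x‖ := norm_pos_iff.mpr hx
  have hu : ∀ y : EN N, y ≠ 0 → HasFDerivAt (fun z : EN N => G (‖z‖ ^ 2))
      (G' (‖y‖ ^ 2) • (2 • innerSL ℝ y)) y := fun y hy =>
    (hG _ (pow_pos (norm_pos_iff.mpr hy) 2)).comp_hasFDerivAt y
      (hasStrictFDerivAt_norm_sq y).hasFDerivAt
  have hG'F : HasFDerivAt (fun y : EN N => G' (‖y‖ ^ 2))
      (G'' (‖x‖ ^ 2) • (2 • innerSL ℝ x)) x :=
    (hG' _ (pow_pos hxn 2)).comp_hasFDerivAt x (hasStrictFDerivAt_norm_sq x).hasFDerivAt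
  have hgrad : gradient (fun z : EN N => G (‖z‖ ^ 2)) x = (2 * G' (‖x‖ ^ 2)) • x := by
    have hg : HasGradientAt (fun z : EN N => G (‖z‖ ^ 2)) ((2 * G' (‖x‖ ^ 2)) • x) x := by
      rw [hasGradientAt_iff_hasFDerivAt]
      refine (hu x hx).congr_fderiv ?_
      ext v
      simp [real_inner_smul_left]
      exact (mul_left_comm _ _ _).trans (mul_assoc _ _ _).symm
    exact hg.gradient
  have hinner : (inner ℝ x (gradient (fun z : EN N => G (‖z‖ ^ 2)) x) : ℝ)
      = 2 * G' (‖x‖ ^ 2) * ‖x‖ ^ 2 := by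
    rw [hgrad, real_inner_smul_right, real_inner_self_eq_norm_sq]
  have hsum : ∑ i : Fin N, (x i) ^ 2 = ‖x‖ ^ 2 := by
    rw [EuclideanSpace.norm_eq, Real.sq_sqrt (by positivity)]
    exact Finset.sum_congr rfl fun i _ => by rw [Real.norm_eq_abs, sq_abs]
  have hlap : lap (fun z : EN N => G (‖z‖ ^ 2)) x
      = 4 * ‖x‖ ^ 2 * G'' (‖x‖ ^ 2) + 2 * N * G' (‖x‖ ^ 2) := by
    unfold lap
    have key : ∀ i : Fin N,
        fderiv ℝ (fun y => fderiv ℝ (fun z : EN N => G (‖z‖ ^ 2)) y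
            (EuclideanSpace.single i 1)) x (EuclideanSpace.single i 1)
          = 4 * G'' (‖x‖ ^ 2) * (x i) ^ 2 + 2 * G' (‖x‖ ^ 2) := by
      intro i
      have hne : (fun y : EN N => fderiv ℝ (fun z : EN N => G (‖z‖ ^ 2)) y
            (EuclideanSpace.single i 1))
          =ᶠ[nhds x] (fun y : EN N =>
            G' (‖y‖ ^ 2) * (2 * (innerSL ℝ (EuclideanSpace.single i (1:ℝ))) y)) := by
        filter_upwards [IsOpen.mem_nhds isOpen_compl_singleton hx] with y hy
        rw [(hu y hy).fderiv]
        simp [real_inner_comm]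
      rw [hne.fderiv_eq]
      have h2 : HasFDerivAt (fun y : EN N =>
            2 * (innerSL ℝ (EuclideanSpace.single i (1:ℝ))) y)
          ((2:ℝ) • innerSL ℝ (EuclideanSpace.single i (1:ℝ))) x :=
        (innerSL ℝ (EuclideanSpace.single i (1:ℝ))).hasFDerivAt.const_mul 2
      have h12 : HasFDerivAt (fun y : EN N => G' (‖y‖ ^ 2) *
          (2 * (innerSL ℝ (EuclideanSpace.single i (1:ℝ))) y)) _ x := hG'F.mul h2
      rw [h12.fderiv]
      have e1 : (inner ℝ (EuclideanSpace.single i (1:ℝ)) (EuclideanSpace.single i (1:ℝ)) : ℝ)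
          = 1 := by
        rw [EuclideanSpace.inner_single_left]
        simp
      have e2 : (inner ℝ (EuclideanSpace.single i (1:ℝ)) x : ℝ) = x i := by
        rw [EuclideanSpace.inner_single_left]
        simp
      have e3 : (inner ℝ x (EuclideanSpace.single i (1:ℝ)) : ℝ) = x i := by
        rw [EuclideanSpace.inner_single_right]
        simp
      simp only [ContinuousLinearMap.add_apply, ContinuousLinearMap.smul_apply,
        innerSL_apply_apply, e1, e2, e3, smul_eq_mul, nsmul_eq_mul, Nat.cast_ofNat]
      ring
    rw [Finset.sum_congr rfl fun i _ => key i, Finset.sum_add_distrib, ← Finset.mul_sum,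
      hsum, Finset.sum_const, Finset.card_univ, Fintype.card_fin, nsmul_eq_mul]
    ring
  rw [wdiv, hlap, hinner]
  have hpow : ‖x‖ ^ (α - 2) * (‖x‖ ^ 2) = ‖x‖ ^ α := by
    rw [show ‖x‖ ^ (2:ℕ) = ‖x‖ ^ ((2:ℕ):ℝ) from (Real.rpow_natCast _ 2).symm,
      ← Real.rpow_add hxn]
    norm_num
  calc ‖x‖ ^ α * (4 * ‖x‖ ^ 2 * G'' (‖x‖ ^ 2) + 2 * ↑N * G' (‖x‖ ^ 2))
      + α * ‖x‖ ^ (α - 2) * (2 * G' (‖x‖ ^ 2) * ‖x‖ ^ 2)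
      = ‖x‖ ^ α * (4 * ‖x‖ ^ 2 * G'' (‖x‖ ^ 2) + 2 * ↑N * G' (‖x‖ ^ 2))
        + 2 * α * G' (‖x‖ ^ 2) * (‖x‖ ^ (α-2) * ‖x‖ ^ 2) := by ring
    _ = ‖x‖ ^ α * (4 * ‖x‖ ^ 2 * G'' (‖x‖ ^ 2) + (2 * ↑N + 2 * α) * G' (‖x‖ ^ 2)) := by
        rw [hpow]; ring

lemma wdivP0 {N : ℕ} (α C b h : ℝ) (x : EN N) (hx : x ≠ 0) :
    wdiv α (fun y : EN N => C * P0 b h (‖y‖ ^ 2)) x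
      = ‖x‖ ^ α * (4 * (‖x‖ ^ 2) * (C * P0'' b h (‖x‖ ^ 2))
          + (2 * N + 2 * α) * (C * P0' b h (‖x‖ ^ 2))) :=
  wdiv_radial α (fun s => C * P0 b h s) (fun s => C * P0' b h s) (fun s => C * P0'' b h s)
    (fun s hs => (l0 b h hs).const_mul C) (fun s hs => (l1 b h hs).const_mul C) x hx

lemma wdivP1 {N : ℕ} (α C b h : ℝ) (x : EN N) (hx : x ≠ 0) :
    wdiv α (fun y : EN N => C * P1 b h (‖y‖ ^ 2)) x
      = ‖x‖ ^ α * (4 * (‖x‖ ^ 2) * (C * P1'' b h (‖x‖ ^ 2))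
          + (2 * N + 2 * α) * (C * P1' b h (‖x‖ ^ 2))) :=
  wdiv_radial α (fun s => C * P1 b h s) (fun s => C * P1' b h s) (fun s => C * P1'' b h s)
    (fun s hs => (l2 b h hs).const_mul C) (fun s hs => (l3 b h hs).const_mul C) x hx


theorem stmt9 {N : ℕ} (hN : 5 ≤ N) (α β γ p : ℝ)
    (hα : 2 - (N : ℝ) < α)
    (hβ1 : ((N : ℝ) - 4) * α / ((N : ℝ) - 2) - 4 ≤ β) (hβ2 : β < α - 2)
    (hγ : γ = ((N : ℝ) + 2 * α - β - 4) ^ 2 / ((N : ℝ) + β) - (N : ℝ))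
    (hp : p = 2 * ((N : ℝ) + γ) / ((N : ℝ) + 2 * α - β - 4)) :
    ∀ x : EN N, x ≠ 0 →
      biop α β (Ufun N α β) x = ‖x‖ ^ γ * Ufun N α β x ^ (p - 1) := by
  have hN5 : (5:ℝ) ≤ (N:ℝ) := by exact_mod_cast hN
  have hN2 : (0:ℝ) < (N:ℝ) - 2 := by linarith
  have hNβ : 0 < (N:ℝ) + β := by
    have h1 : ((N:ℝ) - 4) * α / ((N:ℝ) - 2) ≤ β + 4 := by linarith
    rw [div_le_iff₀ hN2] at h1
    nlinarith [mul_lt_mul_of_pos_left hα (show (0:ℝ) < (N:ℝ) - 4 by linarith)]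
  have ha : 0 < α - β - 2 := by linarith
  set h := (α - β - 2) / 2 with hhdef
  set b := ((N:ℝ) + β) / (α - β - 2) with hbdef
  have hhpos : 0 < h := by rw [hhdef]; linarith
  have hM : 2 * (N:ℝ) + 2 * α = 4 * b * h + 4 * h + 4 := by
    rw [hbdef, hhdef]; field_simp; ring
  set K := ((N:ℝ) + β) * ((N:ℝ) + α - 2) * ((N:ℝ) + 2 * α - β - 4) *
      ((N:ℝ) + 3 * α - 2 * β - 6) with hKdef
  have hKpos : 0 < K := by
    rw [hKdef]
    have f1 : 0 < (N:ℝ) + α - 2 := by linarith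
    have f2 : 0 < (N:ℝ) + 2 * α - β - 4 := by linarith
    have f3 : 0 < (N:ℝ) + 3 * α - 2 * β - 6 := by linarith
    positivity
  set C := K ^ (((N:ℝ) + β) / (4 * (α - β - 2))) with hCdef
  have hCpos : 0 < C := by rw [hCdef]; exact Real.rpow_pos_of_pos hKpos _
  -- representation of Ufun
  have hU : ∀ y : EN N, y ≠ 0 → Ufun N α β y = C * P0 b h (‖y‖ ^ 2) := by
    intro y hy
    have hny : (0:ℝ) < ‖y‖ := norm_pos_iff.mpr hy
    have r1 : ‖y‖ ^ (-(α - β - 2)) = ((‖y‖:ℝ) ^ 2) ^ (-h) := by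
      rw [← Real.rpow_natCast ‖y‖ 2, ← Real.rpow_mul (norm_nonneg y)]
      congr 1
      push_cast
      rw [hhdef]; ring
    have r2 : ‖y‖ ^ (α - β - 2) = ((‖y‖:ℝ) ^ 2) ^ h := by
      rw [← Real.rpow_natCast ‖y‖ 2, ← Real.rpow_mul (norm_nonneg y)]
      congr 1
      push_cast
      rw [hhdef]; ring
    rw [Ufun, P0, ← hKdef, ← hCdef, r1, r2, hbdef]
  -- step 1 : the inner weighted divergence
  have hwd1 : ∀ y : EN N, y ≠ 0 →
      ‖y‖ ^ (-β) * wdiv α (Ufun N α β) y = C * P1 b h (‖y‖ ^ 2) := by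
    intro y hy
    have hny : (0:ℝ) < ‖y‖ := norm_pos_iff.mpr hy
    have hs : (0:ℝ) < ‖y‖ ^ 2 := pow_pos hny 2
    have hev : Ufun N α β =ᶠ[nhds y] (fun z : EN N => C * P0 b h (‖z‖ ^ 2)) := by
      filter_upwards [IsOpen.mem_nhds isOpen_compl_singleton hy] with z hz
      exact hU z hz
    rw [wdiv_congr α hev, wdivP0 α C b h y hy]
    have hnn : ‖y‖ ^ (-β) * ‖y‖ ^ α = ((‖y‖:ℝ) ^ 2) ^ (h + 1) := by
      rw [← Real.rpow_add hny, ← Real.rpow_natCast ‖y‖ 2, ← Real.rpow_mul (norm_nonneg y)]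
      congr 1
      push_cast
      rw [hhdef]; ring
    calc ‖y‖ ^ (-β) * (‖y‖ ^ α * (4 * (‖y‖ ^ 2) * (C * P0'' b h (‖y‖ ^ 2))
          + (2 * (N:ℝ) + 2 * α) * (C * P0' b h (‖y‖ ^ 2))))
        = C * ((‖y‖ ^ (-β) * ‖y‖ ^ α) * (4 * (‖y‖ ^ 2) * P0'' b h (‖y‖ ^ 2)
            + (2 * (N:ℝ) + 2 * α) * P0' b h (‖y‖ ^ 2))) := by ring
      _ = C * (((‖y‖:ℝ) ^ 2) ^ (h + 1) * (4 * (‖y‖ ^ 2) * P0'' b h (‖y‖ ^ 2)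
            + (2 * (N:ℝ) + 2 * α) * P0' b h (‖y‖ ^ 2))) := by rw [hnn]
      _ = C * P1 b h (‖y‖ ^ 2) := by rw [e1 b h (2 * (N:ℝ) + 2 * α) hM hs]
  -- main computation
  intro x hx
  have hnx : (0:ℝ) < ‖x‖ := norm_pos_iff.mpr hx
  have hs : (0:ℝ) < ‖x‖ ^ 2 := pow_pos hnx 2
  have hw : (0:ℝ) < 1 + ((‖x‖:ℝ) ^ 2) ^ h := by positivity
  have hev2 : (fun y : EN N => ‖y‖ ^ (-β) * wdiv α (Ufun N α β) y)
      =ᶠ[nhds x] (fun y : EN N => C * P1 b h (‖y‖ ^ 2)) := by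
    filter_upwards [IsOpen.mem_nhds isOpen_compl_singleton hx] with z hz
    exact hwd1 z hz
  have hLHS : biop α β (Ufun N α β) x
      = C * (16 * b * (b+1) * (b+2) * (b+3) * h ^ 4 *
          (((‖x‖:ℝ) ^ 2) ^ (3 * h + β / 2) * (1 + ((‖x‖:ℝ) ^ 2) ^ h) ^ (-b - 4))) := by
    have hnn2 : ‖x‖ ^ α = ((‖x‖:ℝ) ^ 2) ^ (h + 1 + β / 2) := by
      rw [← Real.rpow_natCast ‖x‖ 2, ← Real.rpow_mul (norm_nonneg x)]
      congr 1
      push_cast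
      rw [hhdef]; ring
    rw [biop, wdiv_congr α hev2, wdivP1 α C b h x hx, hnn2]
    calc ((‖x‖:ℝ) ^ 2) ^ (h + 1 + β / 2) * (4 * (‖x‖ ^ 2) * (C * P1'' b h (‖x‖ ^ 2))
          + (2 * (N:ℝ) + 2 * α) * (C * P1' b h (‖x‖ ^ 2)))
        = C * (((‖x‖:ℝ) ^ 2) ^ (h + 1 + β / 2) * (4 * (‖x‖ ^ 2) * P1'' b h (‖x‖ ^ 2)
            + (2 * (N:ℝ) + 2 * α) * P1' b h (‖x‖ ^ 2))) := by ring
      _ = C * (16 * b * (b+1) * (b+2) * (b+3) * h ^ 4 *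
          (((‖x‖:ℝ) ^ 2) ^ (3 * h + β / 2) * (1 + ((‖x‖:ℝ) ^ 2) ^ h) ^ (-b - 4))) := by
          rw [e2 b h (2 * (N:ℝ) + 2 * α) (β / 2) hM hs]
  -- the right-hand side
  have hmne : ((N:ℝ) + 2 * α - β - 4) ≠ 0 := by
    have : (0:ℝ) < (N:ℝ) + 2 * α - β - 4 := by linarith
    exact this.ne'
  have hb4 : (-b) * (p - 1) = -b - 4 := by
    rw [hbdef, hp, hγ]
    field_simp
    field_simp
    ring
  have hθ : ((((N:ℝ) + β) / (4 * (α - β - 2))) * (p - 1))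
      = (((N:ℝ) + β) / (4 * (α - β - 2))) + 1 := by
    rw [hp, hγ]
    field_simp
    field_simp
    ring
  have hexp : γ / 2 + (-h) * (p - 1) = 3 * h + β / 2 := by
    rw [hhdef, hp, hγ]
    field_simp
    ring
  have hKb : 16 * b * (b+1) * (b+2) * (b+3) * h ^ 4 = K := by
    rw [hbdef, hhdef, hKdef]
    field_simp
    ring
  have hP0pos : 0 < P0 b h (‖x‖ ^ 2) := by
    rw [P0]
    positivity
  have hRHS : ‖x‖ ^ γ * Ufun N α β x ^ (p - 1)
      = C * (K * (((‖x‖:ℝ) ^ 2) ^ (3 * h + β / 2) * (1 + ((‖x‖:ℝ) ^ 2) ^ h) ^ (-b - 4))) := by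
    rw [hU x hx, Real.mul_rpow hCpos.le hP0pos.le, P0,
      Real.mul_rpow (Real.rpow_nonneg hs.le _) (Real.rpow_nonneg hw.le _),
      ← Real.rpow_mul hs.le, ← Real.rpow_mul hw.le, hb4]
    have hxγ : ‖x‖ ^ γ = ((‖x‖:ℝ) ^ 2) ^ (γ / 2) := by
      rw [← Real.rpow_natCast ‖x‖ 2, ← Real.rpow_mul (norm_nonneg x)]
      congr 1
      push_cast
      ring
    have hCp : C ^ (p - 1) = C * K := by
      rw [hCdef, ← Real.rpow_mul hKpos.le, hθ, Real.rpow_add hKpos, Real.rpow_one]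
    have hmerge : ((‖x‖:ℝ) ^ 2) ^ (γ / 2) * ((‖x‖:ℝ) ^ 2) ^ ((-h) * (p - 1))
        = ((‖x‖:ℝ) ^ 2) ^ (3 * h + β / 2) := by
      rw [← Real.rpow_add hs, hexp]
    rw [hxγ, hCp]
    calc ((‖x‖:ℝ) ^ 2) ^ (γ / 2) * (C * K * (((‖x‖:ℝ) ^ 2) ^ ((-h) * (p - 1)) *
            (1 + ((‖x‖:ℝ) ^ 2) ^ h) ^ (-b - 4)))
        = C * K * ((((‖x‖:ℝ) ^ 2) ^ (γ / 2) * ((‖x‖:ℝ) ^ 2) ^ ((-h) * (p - 1))) *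
            (1 + ((‖x‖:ℝ) ^ 2) ^ h) ^ (-b - 4)) := by ring
      _ = C * (K * (((‖x‖:ℝ) ^ 2) ^ (3 * h + β / 2) *
            (1 + ((‖x‖:ℝ) ^ 2) ^ h) ^ (-b - 4))) := by rw [hmerge]; ring
  rw [hLHS, hRHS, hKb]
end
end

section
/- Let N ≥ 5, α ≥ 0, and suppose β = β_FS(α) satisfies (N-4)α/(N-2) - 4 ≤ β < α-2. Let γ, p, U be as in the context. Then for each i ∈ {1,…,N}, the function Z_i(x) := |x|^{(2+β-α)/2} (1+|x|^{α-β-2})^{-(N-2+α)/(α-β-2)} · x_i/|x| satisfies the linearized equation div(|x|^α ∇(|x|^{-β} div(|x|^α ∇Z_i)))(x) = (p-1) |x|^γ U(x)^{p-2} Z_i(x) for all x ∈ ℝ^N \ {0}. -/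
open MeasureTheory Real

noncomputable section

namespace S13

lemma pow2rpow {r : ℝ} (hr : 0 ≤ r) (e : ℝ) : ((r ^ 2 : ℝ)) ^ e = r ^ (2 * e) := by
  rw [← Real.rpow_natCast r 2, ← Real.rpow_mul hr]
  norm_num

def Ff (b A c : ℝ) (Q : ℝ → ℝ) (t : ℝ) : ℝ := t ^ A * (1 + t ^ b) ^ c * Q (t ^ b)

lemma one_add_rpow_pos {t : ℝ} (ht : 0 < t) (b : ℝ) : 0 < 1 + t ^ b := by positivity

lemma hasDerivAt_Ff (b A c : ℝ) (Q Q' : ℝ → ℝ) (hQ : ∀ s, HasDerivAt Q (Q' s) s)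
    {t : ℝ} (ht : 0 < t) :
    HasDerivAt (Ff b A c Q)
      (t ^ (A - 1) * (1 + t ^ b) ^ (c - 1) *
        (A * (1 + t ^ b) * Q (t ^ b) + c * b * t ^ b * Q (t ^ b)
          + b * t ^ b * (1 + t ^ b) * Q' (t ^ b))) t := by
  have hb : HasDerivAt (fun u : ℝ => u ^ b) (b * t ^ (b - 1)) t := by
    simpa [mul_comm] using Real.hasDerivAt_rpow_const (p := b) (Or.inl ht.ne')
  have h1 : HasDerivAt (fun u : ℝ => u ^ A) (A * t ^ (A - 1)) t := by
    simpa [mul_comm] using Real.hasDerivAt_rpow_const (p := A) (Or.inl ht.ne')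
  have h2 : HasDerivAt (fun u : ℝ => (1 + u ^ b) ^ c)
      ((b * t ^ (b - 1)) * c * (1 + t ^ b) ^ (c - 1)) t := by
    have := (hb.const_add 1).rpow_const (p := c) (Or.inl (one_add_rpow_pos ht b).ne')
    simpa using this
  have h3 : HasDerivAt (fun u : ℝ => Q (u ^ b)) (Q' (t ^ b) * (b * t ^ (b - 1))) t :=
    (hQ (t ^ b)).comp t hb
  have h := (h1.mul h2).mul h3
  refine h.congr_deriv ?_
  simp only [Pi.mul_apply]
  have e1 : t ^ (b - 1) = t ^ b / t := by rw [Real.rpow_sub ht, Real.rpow_one]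
  have e2 : t ^ (A - 1) = t ^ A / t := by rw [Real.rpow_sub ht, Real.rpow_one]
  have e3 : (1 + t ^ b) ^ (c - 1) = (1 + t ^ b) ^ c / (1 + t ^ b) := by
    rw [Real.rpow_sub (one_add_rpow_pos ht b), Real.rpow_one]
  rw [e1, e2, e3]
  field_simp

lemma Ff_shift (b A c d : ℝ) (Q : ℝ → ℝ) {t : ℝ} (ht : 0 < t) :
    t ^ d * Ff b A c Q t = Ff b (A + d) c Q t := by
  unfold Ff; rw [Real.rpow_add ht]; ring

def R1 (b A c : ℝ) (Q Q' : ℝ → ℝ) : ℝ → ℝ :=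
  fun s => A * (1 + s) * Q s + c * b * s * Q s + b * s * (1 + s) * Q' s

def DR1 (b A c : ℝ) (Q Q' Q'' : ℝ → ℝ) : ℝ → ℝ :=
  fun s => A * Q s + A * (1 + s) * Q' s + c * b * Q s + c * b * s * Q' s
    + b * (1 + 2 * s) * Q' s + b * s * (1 + s) * Q'' s

def SSf (nn α b A c : ℝ) (Q Q' Q'' : ℝ → ℝ) : ℝ → ℝ :=
  fun s => 4 * R1 b (A - 1) (c - 1) (R1 b A c Q Q') (DR1 b A c Q Q' Q'') s
    + (2 * nn + 4 + 2 * α) * (1 + s) * R1 b A c Q Q' s + α * (1 + s) ^ 2 * Q s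

lemma hasDerivAt_R1 (b A c : ℝ) (Q Q' Q'' : ℝ → ℝ)
    (hQ : ∀ s, HasDerivAt Q (Q' s) s) (hQ' : ∀ s, HasDerivAt Q' (Q'' s) s) (s : ℝ) :
    HasDerivAt (R1 b A c Q Q') (DR1 b A c Q Q' Q'' s) s := by
  have h1p : HasDerivAt (fun s : ℝ => 1 + s) 1 s := (hasDerivAt_id s).const_add 1
  have hs : HasDerivAt (fun s : ℝ => s) 1 s := hasDerivAt_id s
  have hA : HasDerivAt (fun s : ℝ => A * (1 + s) * Q s)
      (A * 1 * Q s + A * (1 + s) * Q' s) s := by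
    have := ((h1p.const_mul A).mul (hQ s))
    exact this.congr_deriv (by ring)
  have hB : HasDerivAt (fun s : ℝ => c * b * s * Q s)
      (c * b * 1 * Q s + c * b * s * Q' s) s := by
    have := ((hs.const_mul (c * b)).mul (hQ s))
    exact this.congr_deriv (by ring)
  have hC : HasDerivAt (fun s : ℝ => b * s * (1 + s) * Q' s)
      ((b * 1 * (1 + s) + b * s * 1) * Q' s + b * s * (1 + s) * Q'' s) s := by
    have hin : HasDerivAt (fun s : ℝ => b * s * (1 + s)) (b * 1 * (1 + s) + b * s * 1) s :=
      (hs.const_mul b).mul h1p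
    have := hin.mul (hQ' s)
    exact this.congr_deriv (by ring)
  have := (hA.add hB).add hC
  exact this.congr_deriv (by unfold DR1; ring)

lemma hasDerivAt_Ff' (b A c : ℝ) (Q Q' : ℝ → ℝ) (hQ : ∀ s, HasDerivAt Q (Q' s) s)
    {t : ℝ} (ht : 0 < t) :
    HasDerivAt (Ff b A c Q) (Ff b (A - 1) (c - 1) (R1 b A c Q Q') t) t := by
  have := hasDerivAt_Ff b A c Q Q' hQ ht
  simpa [Ff, R1] using this

lemma wdiv1d (NN : ℕ) (α b A c : ℝ) (Q Q' Q'' : ℝ → ℝ) {t : ℝ} (ht : 0 < t) :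
    t ^ (α / 2) * (4 * t * Ff b (A - 1 - 1) (c - 1 - 1)
          (R1 b (A - 1) (c - 1) (R1 b A c Q Q') (DR1 b A c Q Q' Q'')) t
        + (2 * NN + 4) * Ff b (A - 1) (c - 1) (R1 b A c Q Q') t)
      + α * t ^ ((α - 2) / 2) * (2 * t * Ff b (A - 1) (c - 1) (R1 b A c Q Q') t + Ff b A c Q t)
    = Ff b (A + α / 2 - 1) (c - 2) (SSf (NN : ℝ) α b A c Q Q' Q'') t := by
  have h1 : (0:ℝ) < 1 + t ^ b := by positivity
  rw [show (α - 2) / 2 = α / 2 - 1 by ring]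
  simp only [Ff, SSf]
  rw [Real.rpow_sub ht (A - 1) 1, Real.rpow_sub h1 (c - 1) 1,
    Real.rpow_sub ht A 1, Real.rpow_sub h1 c 1,
    Real.rpow_sub ht (A + α/2) 1, Real.rpow_add ht A (α/2), Real.rpow_sub ht (α/2) 1,
    Real.rpow_sub h1 c 2, Real.rpow_one,
    show ((2:ℝ)) = ((2:ℕ):ℝ) by norm_num, Real.rpow_natCast]
  field_simp
  simp only [Real.rpow_one]
  push_cast
  ring

variable {N : ℕ}

lemma hasFDerivAt_model (i : Fin N) (φ φ' : ℝ → ℝ)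
    (hφ : ∀ t, 0 < t → HasDerivAt φ (φ' t) t) {y : EN N} (hy : y ≠ 0) :
    HasFDerivAt (fun z : EN N => φ (‖z‖ ^ 2) * z i)
      (φ (‖y‖ ^ 2) • (EuclideanSpace.proj i)
        + (y i) • (φ' (‖y‖ ^ 2) • ((2:ℕ) • (innerSL ℝ y)))) y := by
  have ht : (0:ℝ) < ‖y‖ ^ 2 := by have := norm_pos_iff.2 hy; positivity
  have hn : HasFDerivAt (fun z : EN N => ‖z‖ ^ 2) ((2:ℕ) • (innerSL ℝ y)) y :=
    (hasStrictFDerivAt_norm_sq y).hasFDerivAt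
  have hφc : HasFDerivAt (fun z : EN N => φ (‖z‖ ^ 2))
      (φ' (‖y‖ ^ 2) • ((2:ℕ) • (innerSL ℝ y))) y :=
    (hφ _ ht).comp_hasFDerivAt y hn
  have hyi : HasFDerivAt (fun z : EN N => z i) (EuclideanSpace.proj (𝕜 := ℝ) i) y :=
    (EuclideanSpace.proj (𝕜 := ℝ) i).hasFDerivAt
  exact hφc.mul hyi

lemma fderiv_model_apply (i j : Fin N) (φ φ' : ℝ → ℝ)
    (hφ : ∀ t, 0 < t → HasDerivAt φ (φ' t) t) {y : EN N} (hy : y ≠ 0) :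
    fderiv ℝ (fun z : EN N => φ (‖z‖ ^ 2) * z i) y (EuclideanSpace.single j 1)
      = φ (‖y‖ ^ 2) * ((EuclideanSpace.single j (1:ℝ) : EN N) i)
        + y i * (φ' (‖y‖ ^ 2) * (2 * y j)) := by
  rw [(hasFDerivAt_model i φ φ' hφ hy).fderiv]
  simp [EuclideanSpace.inner_single_right, real_inner_comm]

lemma lap_model (i : Fin N) (φ φ' φ'' : ℝ → ℝ)
    (hφ : ∀ t, 0 < t → HasDerivAt φ (φ' t) t)
    (hφ' : ∀ t, 0 < t → HasDerivAt φ' (φ'' t) t)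
    {x : EN N} (hx : x ≠ 0) :
    lap (fun z : EN N => φ (‖z‖ ^ 2) * z i) x
      = (4 * ‖x‖ ^ 2 * φ'' (‖x‖ ^ 2) + (2 * N + 4) * φ' (‖x‖ ^ 2)) * x i := by
  have ht : (0:ℝ) < ‖x‖ ^ 2 := by have := norm_pos_iff.2 hx; positivity
  have hval : ∀ j : Fin N,
      fderiv ℝ (fun y : EN N =>
          fderiv ℝ (fun z : EN N => φ (‖z‖ ^ 2) * z i) y (EuclideanSpace.single j 1)) x
        (EuclideanSpace.single j 1)
      = φ' (‖x‖ ^ 2) * (2 * x j) * ((EuclideanSpace.single j (1:ℝ) : EN N) i)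
        + (x i * (φ' (‖x‖ ^ 2) * 2 * 1 + φ'' (‖x‖ ^ 2) * (2 * x j) * (2 * x j))
          + φ' (‖x‖ ^ 2) * (2 * x j) * ((EuclideanSpace.single j (1:ℝ) : EN N) i)) := by
    intro j
    have hev : (fun y : EN N =>
        fderiv ℝ (fun z : EN N => φ (‖z‖ ^ 2) * z i) y (EuclideanSpace.single j 1))
        =ᶠ[nhds x] (fun y : EN N => φ (‖y‖ ^ 2) * ((EuclideanSpace.single j (1:ℝ) : EN N) i)
          + y i * (φ' (‖y‖ ^ 2) * (2 * y j))) := by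
      filter_upwards [eventually_ne_nhds hx] with y hy
      exact fderiv_model_apply i j φ φ' hφ hy
    rw [hev.fderiv_eq]
    have hnsq : HasFDerivAt (fun z : EN N => ‖z‖ ^ 2) ((2:ℕ) • (innerSL ℝ x)) x :=
      (hasStrictFDerivAt_norm_sq x).hasFDerivAt
    have hA : HasFDerivAt (fun y : EN N => φ (‖y‖ ^ 2))
        (φ' (‖x‖ ^ 2) • ((2:ℕ) • (innerSL ℝ x))) x := (hφ _ ht).comp_hasFDerivAt x hnsq
    have hC : HasFDerivAt (fun y : EN N => φ' (‖y‖ ^ 2))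
        (φ'' (‖x‖ ^ 2) • ((2:ℕ) • (innerSL ℝ x))) x := (hφ' _ ht).comp_hasFDerivAt x hnsq
    have hD : HasFDerivAt (fun y : EN N => 2 * y j)
        ((2:ℝ) • (EuclideanSpace.proj (𝕜 := ℝ) j)) x :=
      ((EuclideanSpace.proj (𝕜 := ℝ) j).hasFDerivAt).const_mul 2
    have hE := hC.mul hD
    have hPi : HasFDerivAt (fun y : EN N => y i) (EuclideanSpace.proj (𝕜 := ℝ) i) x :=
      (EuclideanSpace.proj (𝕜 := ℝ) i).hasFDerivAt
    have hF := hPi.mul hE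
    have hB := hA.mul_const ((EuclideanSpace.single j (1:ℝ) : EN N) i)
    have hG : HasFDerivAt (fun y : EN N => φ (‖y‖ ^ 2) * ((EuclideanSpace.single j (1:ℝ) : EN N) i)
        + y i * (φ' (‖y‖ ^ 2) * (2 * y j))) _ x := hB.add hF
    rw [hG.fderiv]
    rcases eq_or_ne i j with h | h <;>
      simp [h, EuclideanSpace.inner_single_right, real_inner_comm,
        EuclideanSpace.single_apply] <;> try ring
  unfold lap
  rw [Finset.sum_congr rfl (fun j _ => hval j)]
  have hns : (‖x‖ : ℝ) ^ 2 = ∑ j : Fin N, x j * x j := by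
    rw [EuclideanSpace.norm_eq, Real.sq_sqrt (by positivity)]
    exact Finset.sum_congr rfl fun j _ => by rw [Real.norm_eq_abs, sq_abs, sq]
  simp only [EuclideanSpace.single_apply, mul_ite, mul_one, mul_zero, Finset.sum_add_distrib,
    Finset.sum_ite_eq, Finset.mem_univ, if_true]
  rw [show (∑ j : Fin N, x i * (φ' (‖x‖^2) * 2 + φ'' (‖x‖^2) * (2 * x j) * (2 * x j)))
      = ∑ j : Fin N, (x i * (φ' (‖x‖^2) * 2) + 4 * φ'' (‖x‖^2) * x i * (x j * x j)) from
    Finset.sum_congr rfl fun j _ => by ring]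
  rw [Finset.sum_add_distrib]
  simp only [Finset.sum_const, Finset.card_univ, Fintype.card_fin, nsmul_eq_mul]
  rw [← Finset.mul_sum, ← hns]
  ring

lemma inner_gradient_model (i : Fin N) (φ φ' : ℝ → ℝ)
    (hφ : ∀ t, 0 < t → HasDerivAt φ (φ' t) t) {x : EN N} (hx : x ≠ 0) :
    (inner ℝ x (gradient (fun z : EN N => φ (‖z‖ ^ 2) * z i) x) : ℝ)
      = (2 * ‖x‖ ^ 2 * φ' (‖x‖ ^ 2) + φ (‖x‖ ^ 2)) * x i := by
  have hD := hasFDerivAt_model i φ φ' hφ hx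
  rw [real_inner_comm, hD.hasGradientAt.gradient, InnerProductSpace.toDual_symm_apply]
  have hns : (‖x‖ : ℝ) ^ 2 = ∑ j : Fin N, x j * x j := by
    rw [EuclideanSpace.norm_eq, Real.sq_sqrt (by positivity)]
    exact Finset.sum_congr rfl fun j _ => by rw [Real.norm_eq_abs, sq_abs, sq]
  simp [real_inner_self_eq_norm_sq]
  ring

lemma wdiv_model (i : Fin N) (α : ℝ) (φ φ' φ'' : ℝ → ℝ)
    (hφ : ∀ t, 0 < t → HasDerivAt φ (φ' t) t)
    (hφ' : ∀ t, 0 < t → HasDerivAt φ' (φ'' t) t)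
    {x : EN N} (hx : x ≠ 0) :
    wdiv α (fun z : EN N => φ (‖z‖ ^ 2) * z i) x
      = (‖x‖ ^ α * (4 * ‖x‖ ^ 2 * φ'' (‖x‖ ^ 2) + (2 * N + 4) * φ' (‖x‖ ^ 2))
        + α * ‖x‖ ^ (α - 2) * (2 * ‖x‖ ^ 2 * φ' (‖x‖ ^ 2) + φ (‖x‖ ^ 2))) * x i := by
  unfold wdiv
  rw [lap_model i φ φ' φ'' hφ hφ' hx, inner_gradient_model i φ φ' hφ hx]
  ring

lemma wdiv_Ff (i : Fin N) (α b A c : ℝ) (Q Q' Q'' : ℝ → ℝ)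
    (hQ : ∀ s, HasDerivAt Q (Q' s) s) (hQ' : ∀ s, HasDerivAt Q' (Q'' s) s)
    {x : EN N} (hx : x ≠ 0) :
    wdiv α (fun y : EN N => Ff b A c Q (‖y‖ ^ 2) * y i) x
      = Ff b (A + α / 2 - 1) (c - 2) (SSf (N : ℝ) α b A c Q Q' Q'') (‖x‖ ^ 2) * x i := by
  have ht : (0:ℝ) < ‖x‖ ^ 2 := by have := norm_pos_iff.2 hx; positivity
  have h1 : ∀ t, 0 < t → HasDerivAt (Ff b A c Q) (Ff b (A-1) (c-1) (R1 b A c Q Q') t) t :=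
    fun t ht' => hasDerivAt_Ff' b A c Q Q' hQ ht'
  have h2 : ∀ t, 0 < t → HasDerivAt (Ff b (A-1) (c-1) (R1 b A c Q Q'))
      (Ff b (A-1-1) (c-1-1) (R1 b (A-1) (c-1) (R1 b A c Q Q') (DR1 b A c Q Q' Q'')) t) t :=
    fun t ht' => hasDerivAt_Ff' b (A-1) (c-1) _ _ (hasDerivAt_R1 b A c Q Q' Q'' hQ hQ') ht'
  rw [wdiv_model i α _ _ _ h1 h2 hx]
  congr 1
  have hconv : ∀ e : ℝ, (‖x‖:ℝ) ^ e = ((‖x‖ ^ 2 : ℝ)) ^ (e/2) := fun e => by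
    rw [pow2rpow (norm_nonneg x)]; congr 1; ring
  rw [hconv α, hconv (α - 2)]
  exact wdiv1d N α b A c Q Q' Q'' ht

def K0 (n a a0 : ℝ) : ℝ := 2*n*a0 + 4*a0^2 + 2*a0*a + a
def K1 (n a b a0 c0 : ℝ) : ℝ :=
  4*n*a0 + 2*n*b*c0 + 8*a0^2 + 4*a0*a + 8*a0*b*c0 + 2*a + 2*a*b*c0 + 4*b^2*c0
def K2 (n a b a0 c0 : ℝ) : ℝ :=
  2*n*a0 + 2*n*b*c0 + 4*a0^2 + 2*a0*a + 8*a0*b*c0 + a + 2*a*b*c0 + 4*b^2*c0^2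

lemma hasDerivAt_quad (k0 k1 k2 x : ℝ) :
    HasDerivAt (fun s : ℝ => k0 + k1 * s + k2 * s ^ 2) (k1 + 2 * k2 * x) x := by
  have h1 : HasDerivAt (fun s : ℝ => k1 * s) k1 x := by
    simpa using (hasDerivAt_id x).const_mul k1
  have h2 : HasDerivAt (fun s : ℝ => k2 * s ^ 2) (k2 * (2 * x)) x := by
    simpa using (hasDerivAt_pow 2 x).const_mul k2
  have := (h1.const_add k0).add h2
  exact this.congr_deriv (by ring)

lemma hasDerivAt_lin (k1 k2 x : ℝ) :
    HasDerivAt (fun s : ℝ => k1 + 2 * k2 * s) (2 * k2) x := by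
  simpa using ((hasDerivAt_id x).const_mul (2 * k2)).const_add k1

set_option maxHeartbeats 1000000 in
lemma bigid (n a be c0 q s : ℝ)
    (hFS : (n + 2*a - 4 - be)^2 = (n - 2 + a)^2 + 4*(n - 1))
    (hc0 : c0 * (a - be - 2) = -(n - 2 + a))
    (hq : q * (n + be) = n + be + 4*(a - be - 2)) :
    SSf n a ((a - be - 2)/2) ((be - a)/4 + a/2 - 1 + -(be/2)) (c0 - 2)
        (fun s => K0 n a ((be - a)/4) + K1 n a ((a - be - 2)/2) ((be - a)/4) c0 * s
          + K2 n a ((a - be - 2)/2) ((be - a)/4) c0 * s ^ 2)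
        (fun s => K1 n a ((a - be - 2)/2) ((be - a)/4) c0
          + 2 * K2 n a ((a - be - 2)/2) ((be - a)/4) c0 * s)
        (fun _ => 2 * K2 n a ((a - be - 2)/2) ((be - a)/4) c0) s
      = q * ((n + be) * (n + a - 2) * (n + 2*a - be - 4) * (n + 3*a - 2*be - 6)) * s ^ 2 := by
  simp only [SSf, R1, DR1, K0, K1, K2]
  linear_combination
    (a^3*c0^3*s^4 + (8)*a^3*c0^2*s^3 + a^3*c0^2*s^4 + (27/2)*a^3*c0*s^2 - (5)*a^3*c0*s^3 - (1/2)*a^3*c0*s^4 + (3)*a^3*s - (18)*a^3*s^2 + (3)*a^3*s^3 - (3)*a^2*be*c0^3*s^4 - (22)*a^2*be*c0^2*s^3 - (2)*a^2*be*c0^2*s^4 - (65/2)*a^2*be*c0*s^2 + (15)*a^2*be*c0*s^3 + (3/2)*a^2*be*c0*s^4 - (11/2)*a^2*be*s + (35)*a^2*be*s^2 - (11/2)*a^2*be*s^3 - (6)*a^2*c0^3*s^4 + (2)*a^2*c0^2*n*s^3 + a^2*c0^2*n*s^4 - (48)*a^2*c0^2*s^3 - (6)*a^2*c0^2*s^4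 + (8)*a^2*c0*n*s^2 - (81)*a^2*c0*s^2 + (30)*a^2*c0*s^3 + (3)*a^2*c0*s^4 + (7/2)*a^2*n*s - (19)*a^2*n*s^2 + (7/2)*a^2*n*s^3 - (18)*a^2*s + (108)*a^2*s^2 - (18)*a^2*s^3 + (3)*a*be^2*c0^3*s^4 + (20)*a*be^2*c0^2*s^3 + a*be^2*c0^2*s^4 + (51/2)*a*be^2*c0*s^2 - (15)*a*be^2*c0*s^3 - (3/2)*a*be^2*c0*s^4 + (3)*a*be^2*s - (23)*a*be^2*s^2 + (3)*a*be^2*s^3 + (12)*a*be*c0^3*s^4 - (4)*a*be*c0^2*n*s^3 - (2)*a*be*c0^2*n*s^4 + (88)*a*be*c0^2*s^3 + (8)*a*be*c0^2*s^4 - (14)*a*be*c0*n*s^2 + (130)*a*be*c0*s^2 - (60)*a*be*c0*s^3 - (6)*a*be*c0*s^4 - (5)*a*be*n*s + (24)*a*be*n*s^2 - (5)*a*be*n*s^3 + (22)*a*be*s - (140)*a*be*s^2 + (22)*a*be*s^3 + (12)*a*c0^3*s^4 - (8)*a*c0^2*n*s^3 - (4)*a*c0^2*n*s^4 + (96)*a*c0^2*s^3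 + (12)*a*c0^2*s^4 + a*c0*n^2*s^2 - (34)*a*c0*n*s^2 - (4)*a*c0*n*s^3 - (2)*a*c0*n*s^4 + (164)*a*c0*s^2 - (56)*a*c0*s^3 - (4)*a*c0*s^4 + a*n^2*s - (7)*a*n^2*s^2 + a*n^2*s^3 - (18)*a*n*s + (68)*a*n*s^2 - (18)*a*n*s^3 + (40)*a*s - (208)*a*s^2 + (40)*a*s^3 - (1)*be^3*c0^3*s^4 - (6)*be^3*c0^2*s^3 - (13/2)*be^3*c0*s^2 + (5)*be^3*c0*s^3 + (1/2)*be^3*c0*s^4 - (1/2)*be^3*s + (5)*be^3*s^2 - (1/2)*be^3*s^3 - (6)*be^2*c0^3*s^4 + (2)*be^2*c0^2*n*s^3 + be^2*c0^2*n*s^4 - (40)*be^2*c0^2*s^3 - (2)*be^2*c0^2*s^4 + (6)*be^2*c0*n*s^2 - (51)*be^2*c0*s^2 + (30)*be^2*c0*s^3 + (3)*be^2*c0*s^4 + (3/2)*be^2*n*s - (8)*be^2*n*s^2 + (3/2)*be^2*n*s^3 - (6)*be^2*s + (46)*be^2*s^2 - (6)*be^2*s^3 - (12)*be*c0^3*s^4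 + (8)*be*c0^2*n*s^3 + (4)*be*c0^2*n*s^4 - (88)*be*c0^2*s^3 - (8)*be*c0^2*s^4 - (1)*be*c0*n^2*s^2 + (30)*be*c0*n*s^2 + (4)*be*c0*n*s^3 + (2)*be*c0*n*s^4 - (132)*be*c0*s^2 + (56)*be*c0*s^3 + (4)*be*c0*s^4 - (1)*be*n^2*s + (4)*be*n^2*s^2 - (1)*be*n^2*s^3 + (12)*be*n*s - (44)*be*n*s^2 + (12)*be*n*s^3 - (24)*be*s + (136)*be*s^2 - (24)*be*s^3 - (8)*c0^3*s^4 + (8)*c0^2*n*s^3 + (4)*c0^2*n*s^4 - (64)*c0^2*s^3 - (8)*c0^2*s^4 - (2)*c0*n^2*s^2 + (36)*c0*n*s^2 + (8)*c0*n*s^3 + (4)*c0*n*s^4 - (112)*c0*s^2 + (32)*c0*s^3 - (1)*n^3*s^2 - (4)*n^2*s + (10)*n^2*s^2 - (4)*n^2*s^3 + (24)*n*s - (56)*n*s^2 + (24)*n*s^3 - (32)*s + (128)*s^2 - (32)*s^3) * hc0 +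
    ((1/4)*a - (1/16)*a^2 - (5/4)*a^2*s - (19/8)*a^2*s^2 - (5/4)*a^2*s^3 - (1/16)*a^2*s^4 + (1/2)*a*be*s + a*be*s^2 + (1/2)*a*be*s^3 - (1/8)*a*n - (2)*a*n*s - (15/4)*a*n*s^2 - (2)*a*n*s^3 - (1/8)*a*n*s^4 + (5)*a*s + (19/2)*a*s^2 + (5)*a*s^3 + (1/4)*a*s^4 + (1/16)*be^2 + (1/4)*be^2*s + (3/8)*be^2*s^2 + (1/4)*be^2*s^3 + (1/16)*be^2*s^4 + (1/8)*be*n + be*n*s + (7/4)*be*n*s^2 + be*n*s^3 + (1/8)*be*n*s^4 - (1)*be*s - (2)*be*s^2 - (1)*be*s^3 - (1/2)*n^2*s - (1)*n^2*s^2 - (1/2)*n^2*s^3 + (3)*n*s + (6)*n*s^2 + (3)*n*s^3 - (4)*s - (8)*s^2 - (4)*s^3) * hFS +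
    (-(n+a-2)*(n+2*a-be-4)*(n+3*a-2*be-6)*s^2) * hq

end S13
open S13

theorem stmt13 {N : ℕ} (hN : 5 ≤ N) (α β γ p : ℝ)
    (hα : 0 ≤ α) (hβ : β = betaFS N α)
    (hβ1 : ((N : ℝ) - 4) * α / ((N : ℝ) - 2) - 4 ≤ β) (hβ2 : β < α - 2)
    (hγ : γ = ((N : ℝ) + 2 * α - β - 4) ^ 2 / ((N : ℝ) + β) - (N : ℝ))
    (hp : p = 2 * ((N : ℝ) + γ) / ((N : ℝ) + 2 * α - β - 4))
    (i : Fin N) (Z : EN N → ℝ)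
    (hZ : ∀ x : EN N, Z x = ‖x‖ ^ ((2 + β - α) / 2) *
      (1 + ‖x‖ ^ (α - β - 2)) ^ (-(((N : ℝ) - 2 + α) / (α - β - 2))) * (x i / ‖x‖)) :
    ∀ x : EN N, x ≠ 0 →
      biop α β Z x = (p - 1) * ‖x‖ ^ γ * Ufun N α β x ^ (p - 2) * Z x := by
  intro x hx
  have hN5 : (5:ℝ) ≤ (N:ℝ) := by exact_mod_cast hN
  have hβ4 : (-4:ℝ) ≤ β := by
    have h1 : (0:ℝ) ≤ ((N:ℝ)-4)*α/((N:ℝ)-2) :=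
      div_nonneg (mul_nonneg (by linarith) hα) (by linarith)
    linarith
  have hNβpos : (0:ℝ) < (N:ℝ) + β := by linarith
  have hσpos : (0:ℝ) < α - β - 2 := by linarith
  have hσ : (α - β - 2) ≠ 0 := ne_of_gt hσpos
  have hNβ : ((N:ℝ) + β) ≠ 0 := ne_of_gt hNβpos
  have hmpos : (0:ℝ) < (N:ℝ) + 2*α - β - 4 := by linarith
  have hm : ((N:ℝ) + 2*α - β - 4) ≠ 0 := ne_of_gt hmpos
  have hFS : ((N:ℝ) + 2*α - 4 - β)^2 = ((N:ℝ) - 2 + α)^2 + 4*((N:ℝ) - 1) := by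
    have hd : (0:ℝ) ≤ ((N:ℝ)-2+α)^2 + 4*((N:ℝ)-1) := by nlinarith [sq_nonneg ((N:ℝ)-2+α)]
    have he : (N:ℝ)+2*α-4-β = Real.sqrt (((N:ℝ)-2+α)^2+4*((N:ℝ)-1)) := by
      rw [hβ, betaFS]; ring
    rw [he, Real.sq_sqrt hd]
  have hp2 : p - 2 = 4*(α-β-2)/((N:ℝ)+β) := by rw [hp, hγ]; field_simp; ring
  have hp1 : p - 1 = ((N:ℝ)+β+4*(α-β-2))/((N:ℝ)+β) := by rw [hp, hγ]; field_simp; ring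
  have hxn : (0:ℝ) < ‖x‖ := norm_pos_iff.2 hx
  have ht : (0:ℝ) < (‖x‖:ℝ)^2 := by positivity
  have hZm : Z = fun y : EN N => Ff ((α-β-2)/2) ((β-α)/4) (-(((N:ℝ)-2+α)/(α-β-2)))
      (fun _ => (1:ℝ)) (‖y‖^2) * y i := by
    funext y
    rcases eq_or_ne y 0 with rfl | hy
    · rw [hZ]; simp [Ff]
    · have hr : (0:ℝ) < ‖y‖ := norm_pos_iff.2 hy
      rw [hZ]
      simp only [Ff]
      rw [pow2rpow (norm_nonneg y), pow2rpow (norm_nonneg y),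
        show 2*((β-α)/4) = (2+β-α)/2 - 1 by ring,
        show 2*((α-β-2)/2) = α-β-2 by ring,
        Real.rpow_sub hr ((2+β-α)/2) 1, Real.rpow_one]
      field_simp
  have hQ0 : ∀ s : ℝ, HasDerivAt (fun _ : ℝ => (1:ℝ)) ((fun _ : ℝ => (0:ℝ)) s) s :=
    fun s => hasDerivAt_const s 1
  have hQ0' : ∀ s : ℝ, HasDerivAt (fun _ : ℝ => (0:ℝ)) ((fun _ : ℝ => (0:ℝ)) s) s :=
    fun s => hasDerivAt_const s 0
  have hP2 : SSf (N:ℝ) α ((α-β-2)/2) ((β-α)/4) (-(((N:ℝ)-2+α)/(α-β-2)))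
      (fun _ => (1:ℝ)) (fun _ => (0:ℝ)) (fun _ => (0:ℝ))
      = (fun s : ℝ => K0 (N:ℝ) α ((β-α)/4)
          + K1 (N:ℝ) α ((α-β-2)/2) ((β-α)/4) (-(((N:ℝ)-2+α)/(α-β-2))) * s
          + K2 (N:ℝ) α ((α-β-2)/2) ((β-α)/4) (-(((N:ℝ)-2+α)/(α-β-2))) * s^2) := by
    funext s
    simp only [SSf, R1, DR1, K0, K1, K2]
    ring
  have hinner : (fun y : EN N => ‖y‖ ^ (-β) * wdiv α Z y)
      = fun y : EN N => Ff ((α-β-2)/2) ((β-α)/4 + α/2 - 1 + -(β/2))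
          (-(((N:ℝ)-2+α)/(α-β-2)) - 2)
          (fun s : ℝ => K0 (N:ℝ) α ((β-α)/4)
            + K1 (N:ℝ) α ((α-β-2)/2) ((β-α)/4) (-(((N:ℝ)-2+α)/(α-β-2))) * s
            + K2 (N:ℝ) α ((α-β-2)/2) ((β-α)/4) (-(((N:ℝ)-2+α)/(α-β-2))) * s^2)
          (‖y‖^2) * y i := by
    rw [hZm]
    funext y
    rcases eq_or_ne y 0 with rfl | hy
    · have hz : ((0:EN N) i) = (0:ℝ) := rfl
      simp only [norm_zero, hz, mul_zero]
      rcases eq_or_ne β 0 with hb0 | hb0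
      · subst hb0
        rw [neg_zero, Real.rpow_zero, one_mul]
        unfold wdiv
        rw [norm_zero, Real.zero_rpow (by linarith : α ≠ 0),
          Real.zero_rpow (by linarith : α - 2 ≠ 0)]
        simp
      · rw [Real.zero_rpow (neg_ne_zero.2 hb0), zero_mul]
    · have hty : (0:ℝ) < (‖y‖:ℝ)^2 := by have := norm_pos_iff.2 hy; positivity
      rw [wdiv_Ff i α _ _ _ _ _ _ hQ0 hQ0' hy]
      rw [show (‖y‖:ℝ) ^ (-β) = ((‖y‖^2:ℝ)) ^ (-(β/2)) by
        rw [pow2rpow (norm_nonneg y)]; congr 1; ring]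
      rw [← mul_assoc, Ff_shift _ _ _ _ _ hty, hP2]
  show wdiv α (fun y : EN N => ‖y‖ ^ (-β) * wdiv α Z y) x = _
  rw [hinner]
  rw [wdiv_Ff i α ((α-β-2)/2) ((β-α)/4 + α/2 - 1 + -(β/2)) (-(((N:ℝ)-2+α)/(α-β-2)) - 2)
    _ (fun s : ℝ => K1 (N:ℝ) α ((α-β-2)/2) ((β-α)/4) (-(((N:ℝ)-2+α)/(α-β-2)))
        + 2 * K2 (N:ℝ) α ((α-β-2)/2) ((β-α)/4) (-(((N:ℝ)-2+α)/(α-β-2))) * s)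
    (fun _ : ℝ => 2 * K2 (N:ℝ) α ((α-β-2)/2) ((β-α)/4) (-(((N:ℝ)-2+α)/(α-β-2))))
    (fun s => hasDerivAt_quad _ _ _ s) (fun s => hasDerivAt_lin _ _ s) hx]
  have hZx : Z x = Ff ((α-β-2)/2) ((β-α)/4) (-(((N:ℝ)-2+α)/(α-β-2)))
      (fun _ => (1:ℝ)) (‖x‖^2) * x i := by rw [hZm]
  rw [hZx]
  have hc0m : (-(((N:ℝ)-2+α)/(α-β-2))) * (α-β-2) = -((N:ℝ)-2+α) := by field_simp
  have hqm : (p-1) * ((N:ℝ)+β) = (N:ℝ)+β+4*(α-β-2) := by rw [hp1]; field_simp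
  have hbig := fun s : ℝ =>
    bigid (N:ℝ) α β (-(((N:ℝ)-2+α)/(α-β-2))) (p-1) s hFS hc0m hqm
  -- positivity facts
  have hCb : (0:ℝ) < ((N:ℝ)+β)*((N:ℝ)+α-2)*((N:ℝ)+2*α-β-4)*((N:ℝ)+3*α-2*β-6) := by
    have h1 : (0:ℝ) < (N:ℝ)+α-2 := by linarith
    have h2 : (0:ℝ) < (N:ℝ)+3*α-2*β-6 := by linarith
    exact mul_pos (mul_pos (mul_pos hNβpos h1) hmpos) h2
  have hSpos : (0:ℝ) < ((‖x‖^2:ℝ)) ^ ((α-β-2)/2) := Real.rpow_pos_of_pos ht _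
  have h1S : (0:ℝ) < 1 + ((‖x‖^2:ℝ)) ^ ((α-β-2)/2) := by positivity
  have hCbnn := le_of_lt hCb
  have e1 : Ufun N α β x
      = (((N:ℝ)+β)*((N:ℝ)+α-2)*((N:ℝ)+2*α-β-4)*((N:ℝ)+3*α-2*β-6)) ^ (((N:ℝ)+β)/(4*(α-β-2)))
        * ((((‖x‖^2:ℝ)) ^ ((α-β-2)/2))⁻¹
          * (1 + ((‖x‖^2:ℝ)) ^ ((α-β-2)/2)) ^ (-(((N:ℝ)+β)/(α-β-2)))) := by
    unfold Ufun
    rw [Real.rpow_neg (norm_nonneg x) (α-β-2)]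
    rw [show (‖x‖:ℝ) ^ (α-β-2) = ((‖x‖^2:ℝ)) ^ ((α-β-2)/2) by
      rw [pow2rpow (norm_nonneg x)]; congr 1; ring]
  have hU : Ufun N α β x ^ (p-2)
      = (((N:ℝ)+β)*((N:ℝ)+α-2)*((N:ℝ)+2*α-β-4)*((N:ℝ)+3*α-2*β-6))
        * ((((‖x‖^2:ℝ)) ^ ((α-β-2)/2)) ^ (p-2))⁻¹
        * ((1 + ((‖x‖^2:ℝ)) ^ ((α-β-2)/2)) ^ (4:ℕ))⁻¹ := by
    rw [e1]
    rw [Real.mul_rpow (Real.rpow_nonneg hCbnn _)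
      (mul_nonneg (inv_nonneg.2 hSpos.le) (Real.rpow_nonneg h1S.le _))]
    rw [Real.mul_rpow (inv_nonneg.2 hSpos.le) (Real.rpow_nonneg h1S.le _)]
    rw [← Real.rpow_mul hCbnn,
      show ((N:ℝ)+β)/(4*(α-β-2)) * (p-2) = 1 by rw [hp2]; field_simp,
      Real.rpow_one]
    rw [Real.inv_rpow hSpos.le]
    rw [← Real.rpow_mul h1S.le,
      show (-(((N:ℝ)+β)/(α-β-2))) * (p-2) = -((4:ℕ):ℝ) by
        rw [hp2]; push_cast; field_simp,
      Real.rpow_neg h1S.le, Real.rpow_natCast]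
    ring
  rw [hU]
  simp only [Ff]
  rw [hbig]
  have hexp : γ/2 = ((β-α)/4 + α/2 - 1 + -(β/2) + α/2 - 1) - ((β-α)/4)
      + ((α-β-2)/2 + (α-β-2)/2) + ((α-β-2)/2*(p-2)) := by
    rw [hγ, hp2]; field_simp; ring
  rw [show (‖x‖:ℝ) ^ γ = ((‖x‖^2:ℝ)) ^ (γ/2) by
    rw [pow2rpow (norm_nonneg x)]; congr 1; ring]
  rw [hexp]
  rw [Real.rpow_add ht (((β-α)/4 + α/2 - 1 + -(β/2) + α/2 - 1) - ((β-α)/4)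
        + ((α-β-2)/2 + (α-β-2)/2)) ((α-β-2)/2*(p-2)),
    Real.rpow_add ht (((β-α)/4 + α/2 - 1 + -(β/2) + α/2 - 1) - ((β-α)/4))
        ((α-β-2)/2 + (α-β-2)/2),
    Real.rpow_sub ht ((β-α)/4 + α/2 - 1 + -(β/2) + α/2 - 1) ((β-α)/4),
    Real.rpow_add ht ((α-β-2)/2) ((α-β-2)/2),
    Real.rpow_mul (le_of_lt ht) ((α-β-2)/2) (p-2)]
  rw [Real.rpow_sub h1S (-(((N:ℝ)-2+α)/(α-β-2)) - 2) 2,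
    Real.rpow_sub h1S (-(((N:ℝ)-2+α)/(α-β-2))) 2,
    show ((2:ℝ)) = ((2:ℕ):ℝ) by norm_num, Real.rpow_natCast]
  have hta : (0:ℝ) < ((‖x‖^2:ℝ)) ^ ((β-α)/4) := Real.rpow_pos_of_pos ht _
  have htf : (0:ℝ) < ((‖x‖^2:ℝ)) ^ ((β-α)/4 + α/2 - 1 + -(β/2) + α/2 - 1) :=
    Real.rpow_pos_of_pos ht _
  have hsp : (0:ℝ) < (((‖x‖^2:ℝ)) ^ ((α-β-2)/2)) ^ (p-2) := Real.rpow_pos_of_pos hSpos _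
  have h1c : (0:ℝ) < (1 + ((‖x‖^2:ℝ)) ^ ((α-β-2)/2)) ^ (-(((N:ℝ)-2+α)/(α-β-2))) :=
    Real.rpow_pos_of_pos h1S _
  field_simp
end
end
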